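/- arXiv:1109.5926 — 5 statements merged into one kernel-verified Lean document; each statement's English description precedes it below -/
import Mathlib

section
/- For every nonempty proper subset Z ⊆ V, with complement Z' = V \ Z, the genus of C satisfies g = g_Z + g_{Z'} + k_Z + 1 − n_Z − n_{Z'}. (Lemma 3.3 of the paper, stated via the dual graph.) -/
open Finset

/-- The dual graph of a nodal curve: vertices index the irreducible components,
`i` and `j` are adjacent iff `i ≠ j` and the components meet in at least one node. -/
def dualGraph {V : Type*} (k : V → V → ℕ) : SimpleGraph V :=
  SimpleGraph.fromRel (fun i j => 0 < k i j)

/-- The number of connected components of the subgraph of the dual graph induced on `S`,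
i.e. the number of connected components of the subcurve determined by `S`. -/
noncomputable def nComp {V : Type*} (k : V → V → ℕ) (S : Finset V) : ℕ :=
  Nat.card ((dualGraph k).induce (S : Set V)).ConnectedComponent

/-- The (arithmetic) genus of the subcurve determined by `S`:
`g_S = Σ_{i∈S} g i + (1/2)·Σ_{i∈S} Σ_{j∈S} k i j − |S| + n_S`. -/
noncomputable def genusOf {V : Type*} [DecidableEq V] (g : V → ℕ) (k : V → V → ℕ)
    (S : Finset V) : ℤ :=
  (∑ i ∈ S, (g i : ℤ)) + (∑ i ∈ S, ∑ j ∈ S, (k i j : ℤ)) / 2 - S.card + nComp k S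

lemma even_diag_sum {V : Type*} [DecidableEq V] (k : V → V → ℕ)
    (hsymm : ∀ i j, k i j = k j i) (hdiag : ∀ i, k i i = 0) (S : Finset V) :
    2 ∣ ∑ i ∈ S, ∑ j ∈ S, (k i j : ℤ) := by
  induction S using Finset.induction_on with
  | empty => simp
  | @insert a S' ha ih =>
    rw [Finset.sum_insert ha]
    rw [Finset.sum_insert ha]
    have h1 : ∑ i ∈ S', ∑ j ∈ insert a S', (k i j : ℤ)
        = (∑ i ∈ S', (k i a : ℤ)) + ∑ i ∈ S', ∑ j ∈ S', (k i j : ℤ) := by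
      rw [← Finset.sum_add_distrib]
      exact Finset.sum_congr rfl fun i _ => Finset.sum_insert ha
    rw [h1, hdiag]
    have h2 : ∑ i ∈ S', (k i a : ℤ) = ∑ j ∈ S', (k a j : ℤ) := by
      exact Finset.sum_congr rfl fun i _ => by rw [hsymm]
    push_cast
    rw [h2]
    obtain ⟨c, hc⟩ := ih
    exact ⟨∑ j ∈ S', (k a j : ℤ) + c, by rw [hc]; ring⟩

lemma nComp_univ_eq_one {V : Type*} [Fintype V] [DecidableEq V] (k : V → V → ℕ)
    (hconn : (dualGraph k).Connected) : nComp k (Finset.univ : Finset V) = 1 := by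
  unfold nComp
  rw [Finset.coe_univ]
  have e := (SimpleGraph.induceUnivIso (dualGraph k)).connectedComponentEquiv
  have h1 : Subsingleton ((dualGraph k).induce Set.univ).ConnectedComponent := by
    haveI := hconn.preconnected.subsingleton_connectedComponent
    exact e.subsingleton
  have h2 : Nonempty ((dualGraph k).induce Set.univ).ConnectedComponent := by
    obtain ⟨v⟩ := hconn.nonempty
    exact ⟨SimpleGraph.connectedComponentMk _ ⟨v, trivial⟩⟩
  obtain ⟨c⟩ := h2
  exact Nat.card_eq_one_iff_unique.mpr ⟨h1, ⟨c⟩⟩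

/-- Lemma 3.3: for every nonempty proper subcurve `Z` with complement `Z'`,
`g = g_Z + g_{Z'} + k_Z + 1 − n_Z − n_{Z'}`. -/
theorem genus_decomposition {V : Type*} [Fintype V] [DecidableEq V] [Nonempty V]
    (g : V → ℕ) (k : V → V → ℕ)
    (hsymm : ∀ i j, k i j = k j i) (hdiag : ∀ i, k i i = 0)
    (hconn : (dualGraph k).Connected)
    (Z : Finset V) (hZne : Z.Nonempty) (hZproper : Z ≠ Finset.univ) :
    genusOf g k Finset.univ =
      genusOf g k Z + genusOf g k Zᶜ + (∑ i ∈ Z, ∑ j ∈ Zᶜ, (k i j : ℤ)) + 1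
        - nComp k Z - nComp k Zᶜ := by
  unfold genusOf
  rw [nComp_univ_eq_one k hconn]
  -- sum splittings
  have hg : (∑ i, (g i : ℤ)) = (∑ i ∈ Z, (g i : ℤ)) + ∑ i ∈ Zᶜ, (g i : ℤ) :=
    (Finset.sum_add_sum_compl Z _).symm
  have hcard : ((Finset.univ : Finset V).card : ℤ) = (Z.card : ℤ) + (Zᶜ.card : ℤ) := by
    rw [← Nat.cast_add, Finset.card_add_card_compl]
    simp
  have hswap : ∑ i ∈ Zᶜ, ∑ j ∈ Z, (k i j : ℤ) = ∑ i ∈ Z, ∑ j ∈ Zᶜ, (k i j : ℤ) := by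
    rw [Finset.sum_comm]
    exact Finset.sum_congr rfl fun i _ => Finset.sum_congr rfl fun j _ => by rw [hsymm]
  have hk : ∑ i, ∑ j, (k i j : ℤ) =
      (∑ i ∈ Z, ∑ j ∈ Z, (k i j : ℤ)) + (∑ i ∈ Zᶜ, ∑ j ∈ Zᶜ, (k i j : ℤ))
        + 2 * ∑ i ∈ Z, ∑ j ∈ Zᶜ, (k i j : ℤ) := by
    have : ∀ i : V, ∑ j, (k i j : ℤ) = (∑ j ∈ Z, (k i j : ℤ)) + ∑ j ∈ Zᶜ, (k i j : ℤ) :=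
      fun i => (Finset.sum_add_sum_compl Z _).symm
    calc ∑ i, ∑ j, (k i j : ℤ)
        = (∑ i ∈ Z, ∑ j, (k i j : ℤ)) + ∑ i ∈ Zᶜ, ∑ j, (k i j : ℤ) :=
          (Finset.sum_add_sum_compl Z _).symm
      _ = _ := by
          simp_rw [this, Finset.sum_add_distrib]
          rw [hswap]; ring
  obtain ⟨a, ha⟩ := even_diag_sum k hsymm hdiag Z
  obtain ⟨b, hb⟩ := even_diag_sum k hsymm hdiag Zᶜ
  rw [hg, hcard, hk, ha, hb]
  have h2 : (2:ℤ) ≠ 0 := by norm_num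
  rw [show 2*a + 2*b + 2*(∑ i ∈ Z, ∑ j ∈ Zᶜ, (k i j : ℤ)) =
      2*(a + b + ∑ i ∈ Z, ∑ j ∈ Zᶜ, (k i j : ℤ)) by ring,
    Int.mul_ediv_cancel_left _ h2, Int.mul_ediv_cancel_left _ h2,
    Int.mul_ediv_cancel_left _ h2]
  ring
end

section
/- Let d be a semistable multidegree on C of total degree g − 1 and let Z ⊆ V be a nonempty subset with complement Z' = V \ Z. Define the multidegree e : V → ℤ by e i = d i − Σ_{j∈Z'} k i j for i ∈ Z and e i = d i + Σ_{j∈Z} k i j for i ∈ Z' (so e = d − deg(O_C(Z')) for the twister O_C(Z')). Assume that the restriction of e to Z has total degree e_Z = g_Z − 1 and is semistable on Z, i.e., e_Y ≥ g_Y − n_Y for every nonempty proper subset Y ⊊ Z. Then e has total degree g − 1 and is a semistable multidegree on C, i.e., e_S ≥ g_S − n_S for every nonempty proper subset S ⊆ V. (Proposition 3.8 of the paper, stated via the dual graph.) -/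
open Finset

lemma even_ksum {V : Type*} [DecidableEq V] (k : V → V → ℕ)
    (hsymm : ∀ i j, k i j = k j i) (hdiag : ∀ i, k i i = 0) (S : Finset V) :
    ∃ c : ℤ, (∑ i ∈ S, ∑ j ∈ S, (k i j : ℤ)) = 2 * c := by
  induction S using Finset.induction_on with
  | empty => exact ⟨0, by simp⟩
  | @insert a S ha ih =>
    obtain ⟨c, hc⟩ := ih
    refine ⟨(∑ j ∈ S, (k a j : ℤ)) + c, ?_⟩
    rw [Finset.sum_insert ha]
    have h1 : ∀ i, ∑ j ∈ insert a S, (k i j : ℤ) = (k i a : ℤ) + ∑ j ∈ S, (k i j : ℤ) :=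
      fun i => Finset.sum_insert ha
    rw [h1 a, hdiag a]
    have h2 : ∑ i ∈ S, ∑ j ∈ insert a S, (k i j : ℤ)
        = (∑ i ∈ S, (k i a : ℤ)) + ∑ i ∈ S, ∑ j ∈ S, (k i j : ℤ) := by
      simp_rw [h1]; rw [Finset.sum_add_distrib]
    have h3 : ∑ i ∈ S, (k i a : ℤ) = ∑ j ∈ S, (k a j : ℤ) := by
      exact Finset.sum_congr rfl fun i _ => by rw [hsymm]
    rw [h2, h3, hc]; ring

lemma sum_sum_swap {V : Type*} (k : V → V → ℕ) (hsymm : ∀ i j, k i j = k j i)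
    (A B : Finset V) :
    ∑ i ∈ B, ∑ j ∈ A, (k i j : ℤ) = ∑ i ∈ A, ∑ j ∈ B, (k i j : ℤ) := by
  rw [Finset.sum_comm]
  exact Finset.sum_congr rfl fun a _ => Finset.sum_congr rfl fun b _ => by rw [hsymm]

lemma one_le_nComp {V : Type*} [Fintype V] (k : V → V → ℕ) (S : Finset V)
    (hS : S.Nonempty) : 1 ≤ (nComp k S : ℤ) := by
  obtain ⟨x, hx⟩ := hS
  have hne : Nonempty ((dualGraph k).induce (S : Set V)).ConnectedComponent :=
    ⟨((dualGraph k).induce (S : Set V)).connectedComponentMk ⟨x, hx⟩⟩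
  have : 0 < Nat.card ((dualGraph k).induce (S : Set V)).ConnectedComponent :=
    Nat.card_pos
  unfold nComp; exact_mod_cast this

lemma genus_sub_nComp {V : Type*} [DecidableEq V] (g : V → ℕ) (k : V → V → ℕ)
    (S : Finset V) :
    genusOf g k S - (nComp k S : ℤ) =
      (∑ i ∈ S, (g i : ℤ)) + (∑ i ∈ S, ∑ j ∈ S, (k i j : ℤ)) / 2 - S.card := by
  unfold genusOf; ring

lemma phi_union {V : Type*} [DecidableEq V] (g : V → ℕ) (k : V → V → ℕ)
    (hsymm : ∀ i j, k i j = k j i) (hdiag : ∀ i, k i i = 0)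
    (A B : Finset V) (hAB : Disjoint A B) :
    genusOf g k (A ∪ B) - (nComp k (A ∪ B) : ℤ) =
      (genusOf g k A - nComp k A) + (genusOf g k B - nComp k B)
        + ∑ i ∈ A, ∑ j ∈ B, (k i j : ℤ) := by
  rw [genus_sub_nComp, genus_sub_nComp, genus_sub_nComp]
  have hcard : ((A ∪ B).card : ℤ) = A.card + B.card := by
    rw [Finset.card_union_of_disjoint hAB]; push_cast; ring
  have hg : ∑ i ∈ A ∪ B, (g i : ℤ) = ∑ i ∈ A, (g i : ℤ) + ∑ i ∈ B, (g i : ℤ) :=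
    Finset.sum_union hAB
  obtain ⟨a, hA2⟩ := even_ksum k hsymm hdiag A
  obtain ⟨b, hB2⟩ := even_ksum k hsymm hdiag B
  have hinner : ∀ i, ∑ j ∈ A ∪ B, (k i j : ℤ) = ∑ j ∈ A, (k i j : ℤ) + ∑ j ∈ B, (k i j : ℤ) :=
    fun i => Finset.sum_union hAB
  have hkk : ∑ i ∈ A ∪ B, ∑ j ∈ A ∪ B, (k i j : ℤ)
      = (∑ i ∈ A, ∑ j ∈ A, (k i j : ℤ)) + (∑ i ∈ B, ∑ j ∈ B, (k i j : ℤ))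
        + 2 * ∑ i ∈ A, ∑ j ∈ B, (k i j : ℤ) := by
    rw [Finset.sum_union hAB]
    simp_rw [hinner]
    rw [Finset.sum_add_distrib, Finset.sum_add_distrib, sum_sum_swap k hsymm A B]
    ring
  rw [hg, hcard, hkk, hA2, hB2]
  omega

/-- Proposition 3.8: if `d` is a semistable multidegree of total degree `g − 1`, `Z` is a
nonempty subcurve with complement `Z'`, and `e = d − deg(O_C(Z'))` restricts to a semistable
multidegree of total degree `g_Z − 1` on `Z`, then `e` is a semistable multidegree on `C`
of total degree `g − 1`. -/
theorem semistable_of_twist_semistable_on_subcurve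
    {V : Type*} [Fintype V] [DecidableEq V] [Nonempty V]
    (g : V → ℕ) (k : V → V → ℕ)
    (hsymm : ∀ i j, k i j = k j i) (hdiag : ∀ i, k i i = 0)
    (hconn : (dualGraph k).Connected)
    (d : V → ℤ)
    (hd_total : ∑ i, d i = genusOf g k Finset.univ - 1)
    (hd_ss : ∀ S : Finset V, S.Nonempty → S ≠ Finset.univ →
      (∑ i ∈ S, d i) ≥ genusOf g k S - nComp k S)
    (Z : Finset V) (hZne : Z.Nonempty)
    (e : V → ℤ)
    (he : ∀ i, e i = if i ∈ Z then d i - ∑ j ∈ Zᶜ, (k i j : ℤ)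
                     else d i + ∑ j ∈ Z, (k i j : ℤ))
    (heZ_total : ∑ i ∈ Z, e i = genusOf g k Z - 1)
    (heZ_ss : ∀ Y : Finset V, Y ⊆ Z → Y.Nonempty → Y ≠ Z →
      (∑ i ∈ Y, e i) ≥ genusOf g k Y - nComp k Y) :
    (∑ i, e i = genusOf g k Finset.univ - 1) ∧
      ∀ S : Finset V, S.Nonempty → S ≠ Finset.univ →
        (∑ i ∈ S, e i) ≥ genusOf g k S - nComp k S := by
  -- sums of e over subsets of Z and of Zᶜ
  have heOnZ : ∀ Y : Finset V, Y ⊆ Z →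
      ∑ i ∈ Y, e i = (∑ i ∈ Y, d i) - ∑ i ∈ Y, ∑ j ∈ Zᶜ, (k i j : ℤ) := by
    intro Y hY
    rw [← Finset.sum_sub_distrib]
    exact Finset.sum_congr rfl fun i hi => by rw [he i, if_pos (hY hi)]
  have heOnZc : ∀ B : Finset V, B ⊆ Zᶜ →
      ∑ i ∈ B, e i = (∑ i ∈ B, d i) + ∑ i ∈ B, ∑ j ∈ Z, (k i j : ℤ) := by
    intro B hB
    rw [← Finset.sum_add_distrib]
    refine Finset.sum_congr rfl fun i hi => ?_
    rw [he i, if_neg (by simpa using hB hi)]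
  -- total degree of e equals total degree of d
  have htot : ∑ i, e i = ∑ i, d i := by
    rw [← Finset.sum_add_sum_compl Z e, ← Finset.sum_add_sum_compl Z d,
      heOnZ Z le_rfl, heOnZc Zᶜ le_rfl,
      sum_sum_swap k hsymm Z Zᶜ]
    ring
  -- e dominates the genus bound on subsets of Z
  have heA : ∀ Y : Finset V, Y ⊆ Z → Y.Nonempty →
      (∑ i ∈ Y, e i) ≥ genusOf g k Y - nComp k Y := by
    intro Y hY hYne
    by_cases hYZ : Y = Z
    · subst hYZ
      rw [heZ_total]
      have := one_le_nComp k Y hYne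
      linarith
    · exact heZ_ss Y hY hYne hYZ
  refine ⟨htot.trans hd_total, ?_⟩
  intro S hSne hSuniv
  -- split S into A = S ∩ Z and B = S ∩ Zᶜ
  set A := S ∩ Z with hA
  set B := S ∩ Zᶜ with hB
  have hAZ : A ⊆ Z := Finset.inter_subset_right
  have hBZc : B ⊆ Zᶜ := Finset.inter_subset_right
  have hdisj : Disjoint A B := by
    refine Finset.disjoint_left.mpr fun x hx hx' => ?_
    have h1 : x ∈ Z := hAZ hx
    have h2 : x ∈ Zᶜ := hBZc hx'
    exact (Finset.mem_compl.mp h2) h1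
  have hS : S = A ∪ B := by
    rw [hA, hB, ← Finset.inter_union_distrib_left, Finset.union_compl, Finset.inter_univ]
  have hBnuniv : B ≠ Finset.univ := by
    intro h
    obtain ⟨z, hz⟩ := hZne
    have : z ∈ B := h ▸ Finset.mem_univ z
    have h2 : z ∈ Zᶜ := hBZc this
    exact (Finset.mem_compl.mp h2) hz
  -- bound for B-part
  have hBbound : ∀ hBne : B.Nonempty,
      (∑ i ∈ B, e i) ≥ (genusOf g k B - nComp k B) + ∑ i ∈ B, ∑ j ∈ Z, (k i j : ℤ) := by
    intro hBne
    rw [heOnZc B hBZc]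
    have := hd_ss B hBne hBnuniv
    linarith
  have hknonneg : ∀ (X Y : Finset V), (0:ℤ) ≤ ∑ i ∈ X, ∑ j ∈ Y, (k i j : ℤ) :=
    fun X Y => Finset.sum_nonneg fun i _ => Finset.sum_nonneg fun j _ => Int.ofNat_nonneg _
  rcases Finset.eq_empty_or_nonempty A with hAem | hAne
  · -- S = B ⊆ Zᶜ
    have hSB : S = B := by rw [hS, hAem, Finset.empty_union]
    rw [hSB]
    have := hBbound (hSB ▸ hSne)
    have := hknonneg B Z
    linarith
  rcases Finset.eq_empty_or_nonempty B with hBem | hBne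
  · -- S = A ⊆ Z
    have hSA : S = A := by rw [hS, hBem, Finset.union_empty]
    rw [hSA]
    exact heA A hAZ (hSA ▸ hSne)
  · -- both parts nonempty
    have hsplit : ∑ i ∈ S, e i = (∑ i ∈ A, e i) + ∑ i ∈ B, e i := by
      rw [hS, Finset.sum_union hdisj]
    have h1 := heA A hAZ hAne
    have h2 := hBbound hBne
    have hkk : ∑ i ∈ B, ∑ j ∈ A, (k i j : ℤ) ≤ ∑ i ∈ B, ∑ j ∈ Z, (k i j : ℤ) :=
      Finset.sum_le_sum fun i _ =>
        Finset.sum_le_sum_of_subset_of_nonneg hAZ fun j _ _ => Int.ofNat_nonneg _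
    have hphi := phi_union (V := V) g k hsymm hdiag A B hdisj
    rw [← sum_sum_swap k hsymm A B] at hphi
    have hgen : genusOf g k S - (nComp k S : ℤ)
        = (genusOf g k A - nComp k A) + (genusOf g k B - nComp k B)
          + ∑ i ∈ B, ∑ j ∈ A, (k i j : ℤ) := by rw [hS]; exact hphi
    rw [hsplit, hgen]
    linarith
end

section
/- A multidegree d on the circular curve C of total degree g − 1 (i.e., Σ_i d_i = Σ_i g_i) is semistable if and only if both of the following hold: (a) g_i − 1 ≤ d_i ≤ g_i + 1 for every i ∈ ℤ/γℤ; and (b) either I^+ = I^− = ∅, or both I^+ and I^− are nonempty and their elements alternate in cyclic order around ℤ/γℤ, i.e., for any element of I^− the open cyclic arc from it to the next element of I^− (going once around in the positive direction) contains exactly one element of I^+, and for any element of I^+ the open cyclic arc from it to the next element of I^+ contains exactly one element of I^−. (Lemma 4.2 of the paper.) -/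
open Finset

/-- The number of connected components of the subcurve of a circular curve indexed by `S`:
the number of `i ∈ S` with `i − 1 ∉ S`. -/
def nCirc {γ : ℕ} (S : Finset (ZMod γ)) : ℕ :=
  (S.filter (fun i => i - 1 ∉ S)).card

/-- The length of the gap from `i` to the next element of `I` in the positive cyclic
direction: the least `m > 0` with `i + m ∈ I`. -/
noncomputable def nextGap {γ : ℕ} (I : Finset (ZMod γ)) (i : ZMod γ) : ℕ :=
  sInf {m : ℕ | 0 < m ∧ (i + (m : ZMod γ)) ∈ I}

/-- The open cyclic arc from `i` to the next element of `I` in the positive cyclic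
direction. -/
noncomputable def openArc {γ : ℕ} [DecidableEq (ZMod γ)] (I : Finset (ZMod γ))
    (i : ZMod γ) : Finset (ZMod γ) :=
  (Finset.Ioo 0 (nextGap I i)).image (fun t : ℕ => i + (t : ZMod γ))

/-! Write `e = d - g`. It has total sum zero, so `e i = v (i + 1) - v i` for a potential
`v : ZMod γ → ℤ`, and the sum of `e` over an arc is a difference of two values of `v`.
Semistability says exactly that `v` takes at most two adjacent values: arcs (subcurves with one
component) force `v x ≤ v y + 1`, and conversely if `v` ranges in `{0, 1}` then the sum of `e`
over a subcurve telescopes to a sum over its component ends, which is at least `-n_S`.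
A potential with two adjacent values steps by `e i ∈ {-1, 0, 1}`, and its down-steps `I⁻` and
up-steps `I⁺` alternate; conversely, alternating steps starting with a down-step keep every
partial sum in `{-1, 0}`. -/

namespace CircularCurve

section Arcs

variable {γ : ℕ}

theorem add_natCast_injOn (i : ZMod γ) :
    Set.InjOn (fun t : ℕ => i + (t : ZMod γ)) (Set.Iio γ) := by
  intro s hs t ht hst
  simpa [ZMod.val_cast_of_lt hs, ZMod.val_cast_of_lt ht] using
    congrArg ZMod.val (add_left_cancel hst)

theorem sum_image_add_range {M : Type*} [AddCommMonoid M] (f : ZMod γ → M) (y : ZMod γ)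
    {k : ℕ} (hk : k ≤ γ) :
    ∑ x ∈ (range k).image (fun t : ℕ => y + (t : ZMod γ)), f x = ∑ t ∈ range k, f (y + t) :=
  Finset.sum_image fun _ hs _ ht =>
    add_natCast_injOn y (lt_of_lt_of_le (mem_range.1 hs) hk) (lt_of_lt_of_le (mem_range.1 ht) hk)

variable [NeZero γ]

theorem image_add_range_eq_univ (y : ZMod γ) :
    (range γ).image (fun t : ℕ => y + (t : ZMod γ)) = univ := by
  refine eq_univ_of_card _ ?_
  rw [card_image_of_injOn, card_range, ZMod.card]
  exact (add_natCast_injOn y).mono fun t ht => mem_range.1 ht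

theorem sum_range_add_eq_sum {M : Type*} [AddCommMonoid M] (f : ZMod γ → M) (y : ZMod γ) :
    ∑ t ∈ range γ, f (y + t) = ∑ x, f x := by
  rw [← sum_image_add_range f y le_rfl, image_add_range_eq_univ]

end Arcs

section Potential

variable {γ : ℕ} {e v : ZMod γ → ℤ}

theorem sum_range_eq_sub_of_potential (hv : ∀ j, e j = v (j + 1) - v j) (y : ZMod γ) (k : ℕ) :
    ∑ t ∈ range k, e (y + t) = v (y + k) - v y := by
  have := Finset.sum_range_sub (fun t : ℕ => v (y + t)) k
  simp only [Nat.cast_add, Nat.cast_one, Nat.cast_zero, add_zero, ← add_assoc] at this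
  rw [← this]
  exact Finset.sum_congr rfl fun t _ => hv _

variable [NeZero γ]

theorem sub_eq_sum_range_of_potential (hv : ∀ j, e j = v (j + 1) - v j) (x y : ZMod γ) :
    v x - v y = ∑ t ∈ range (x - y).val, e (y + t) := by
  rw [sum_range_eq_sub_of_potential hv, ZMod.natCast_zmod_val, add_sub_cancel]

theorem exists_potential (he0 : ∑ j, e j = 0) : ∃ v : ZMod γ → ℤ, ∀ j, e j = v (j + 1) - v j := by
  refine ⟨fun j => ∑ t ∈ range j.val, e t, fun j => ?_⟩
  show e j = ∑ t ∈ range (j + 1).val, e t - ∑ t ∈ range j.val, e t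
  have hval : (j + 1).val = (j.val + 1) % γ := by
    rw [ZMod.val_add, ZMod.val_one_eq_one_mod, Nat.add_mod_mod]
  rcases (Nat.add_one_le_of_lt (ZMod.val_lt j)).lt_or_eq with hlt | heq
  · rw [hval, Nat.mod_eq_of_lt hlt, sum_range_succ, ZMod.natCast_zmod_val]
    ring
  · have htotal : ∑ t ∈ range (j.val + 1), e t = 0 := by
      rw [heq, ← he0, ← sum_range_add_eq_sum e 0]
      simp only [zero_add]
    rw [sum_range_succ, ZMod.natCast_zmod_val] at htotal
    rw [hval, heq, Nat.mod_self, range_zero, sum_empty]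
    linarith

end Potential

section Semistable

variable {γ : ℕ}

/-- Semistability of a multidegree `d`, written in terms of `e = d - g`. -/
def Semistable [NeZero γ] (e : ZMod γ → ℤ) : Prop :=
  ∀ S : Finset (ZMod γ), S.Nonempty → S ≠ univ → -(nCirc S : ℤ) ≤ ∑ i ∈ S, e i

theorem nCirc_image_add_range_le_one (y : ZMod γ) (k : ℕ) :
    nCirc ((range k).image (fun t : ℕ => y + (t : ZMod γ))) ≤ 1 := by
  suffices ∀ x, x ∈ (range k).image (fun t : ℕ => y + (t : ZMod γ)) →
      x - 1 ∉ (range k).image (fun t : ℕ => y + (t : ZMod γ)) → x = y from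
    card_le_one.2 fun a ha b hb => by
      rw [mem_filter] at ha hb
      rw [this a ha.1 ha.2, this b hb.1 hb.2]
  intro x hx hprev
  simp only [mem_image, mem_range] at hx hprev
  obtain ⟨t, ht, rfl⟩ := hx
  cases t with
  | zero => simp
  | succ t => exact absurd ⟨t, by omega, by push_cast; ring⟩ hprev

variable {e v : ZMod γ → ℤ}

theorem neg_nCirc_le_sum_of_potential (hv : ∀ j, e j = v (j + 1) - v j)
    (hv0 : ∀ j, 0 ≤ v j) (hv1 : ∀ j, v j ≤ 1) (S : Finset (ZMod γ)) :
    -(nCirc S : ℤ) ≤ ∑ i ∈ S, e i := by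
  have hinner : ∑ j ∈ S with j + 1 ∈ S, v (j + 1) = ∑ j ∈ S with j - 1 ∈ S, v j :=
    sum_nbij' (· + 1) (· - 1) (by simp +contextual) (by simp +contextual) (by simp) (by simp)
      (by simp)
  have hout : 0 ≤ ∑ j ∈ S with j + 1 ∉ S, v (j + 1) := sum_nonneg fun j _ => hv0 _
  have hin : ∑ j ∈ S with j - 1 ∉ S, v j ≤ nCirc S := by
    simpa [nCirc] using sum_le_card_nsmul _ _ 1 fun j _ => hv1 j
  rw [sum_congr rfl fun j _ => hv j, sum_sub_distrib,
    ← sum_filter_add_sum_filter_not S (· + 1 ∈ S), ← sum_filter_add_sum_filter_not S (· - 1 ∈ S),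
    hinner]
  linarith

variable [NeZero γ]

theorem le_add_one_of_semistable (hv : ∀ j, e j = v (j + 1) - v j) (hss : Semistable e)
    (x y : ZMod γ) : v x ≤ v y + 1 := by
  rcases eq_or_ne x y with rfl | hxy
  · omega
  set k := (y - x).val
  have hk0 : k ≠ 0 := (ZMod.val_ne_zero _).2 (sub_ne_zero.2 hxy.symm)
  have hkγ : k < γ := ZMod.val_lt _
  have hproper : (range k).image (fun t : ℕ => x + (t : ZMod γ)) ≠ univ := fun h => by
    have := (card_image_le (s := range k) (f := fun t : ℕ => x + (t : ZMod γ))).trans_lt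
      ((card_range k).symm ▸ hkγ)
    rw [h, card_univ, ZMod.card] at this
    exact this.false
  have hsum := hss _ (by simpa using hk0) hproper
  rw [sum_image_add_range e x hkγ.le, ← sub_eq_sum_range_of_potential hv] at hsum
  have := nCirc_image_add_range_le_one x k
  omega

theorem semistable_iff_forall_le_add_one (hv : ∀ j, e j = v (j + 1) - v j) :
    Semistable e ↔ ∀ x y, v x ≤ v y + 1 := by
  refine ⟨le_add_one_of_semistable hv, fun hosc S _ _ => ?_⟩
  obtain ⟨m, hm⟩ := Finite.exists_min v
  exact neg_nCirc_le_sum_of_potential (v := fun j => v j - v m) (fun j => by rw [hv]; ring)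
    (fun j => sub_nonneg.2 (hm j)) (fun j => by linarith [hosc j m]) S

end Semistable

section NextGap

variable {γ : ℕ} {I J : Finset (ZMod γ)} {i : ZMod γ}

theorem nextGap_le {m : ℕ} (hm : 0 < m) (him : i + (m : ZMod γ) ∈ I) : nextGap I i ≤ m :=
  Nat.sInf_le ⟨hm, him⟩

theorem add_notMem_of_lt_nextGap {t : ℕ} (ht : 0 < t) (htG : t < nextGap I i) :
    i + (t : ZMod γ) ∉ I :=
  fun h => Nat.notMem_of_lt_sInf htG ⟨ht, h⟩

theorem exists_add_mem_of_openArc_inter_nonempty (h : (openArc I i ∩ J).Nonempty) {m : ℕ}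
    (hm : 0 < m) (him : i + (m : ZMod γ) ∈ I) : ∃ t, 0 < t ∧ t < m ∧ i + (t : ZMod γ) ∈ J := by
  obtain ⟨x, hx⟩ := h
  simp only [openArc, mem_inter, mem_image, mem_Ioo] at hx
  obtain ⟨⟨t, ⟨ht0, htG⟩, rfl⟩, hJ⟩ := hx
  exact ⟨t, ht0, htG.trans_le (nextGap_le hm him), hJ⟩

variable [NeZero γ]

theorem nextGap_set_nonempty (hi : i ∈ I) :
    {m : ℕ | 0 < m ∧ i + (m : ZMod γ) ∈ I}.Nonempty :=
  ⟨γ, NeZero.pos γ, by simpa using hi⟩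

theorem nextGap_pos (hi : i ∈ I) : 0 < nextGap I i :=
  (Nat.sInf_mem (nextGap_set_nonempty hi)).1

theorem add_nextGap_mem (hi : i ∈ I) : i + (nextGap I i : ZMod γ) ∈ I :=
  (Nat.sInf_mem (nextGap_set_nonempty hi)).2

theorem nextGap_le_card (hi : i ∈ I) : nextGap I i ≤ γ :=
  nextGap_le (NeZero.pos γ) (by simpa using hi)

theorem card_openArc_inter (hi : i ∈ I) (J : Finset (ZMod γ)) :
    #(openArc I i ∩ J) = #((Ioo 0 (nextGap I i)).filter fun t : ℕ => i + (t : ZMod γ) ∈ J) := by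
  rw [openArc, ← filter_mem_eq_inter, filter_image, card_image_of_injOn]
  exact (add_natCast_injOn i).mono fun t ht =>
    lt_of_lt_of_le (mem_Ioo.1 (mem_filter.1 ht).1).2 (nextGap_le_card hi)

end NextGap

section Alternation

theorem sum_range_eq_neg_one_or_zero_of_alternating (f : ℕ → ℤ)
    (hval : ∀ t, -1 ≤ f t ∧ f t ≤ 1)
    (halt : ∀ s m, 0 < m → f s ≠ 0 → f (s + m) = f s → ∃ t, 0 < t ∧ t < m ∧ f (s + t) = -f s)
    (h0 : f 0 = -1) {k : ℕ} (hk : 0 < k) :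
    ∑ t ∈ range k, f t = -1 ∨ ∑ t ∈ range k, f t = 0 := by
  -- invariant: twice the partial sum, plus one, is the last nonzero step
  have key : ∃ s < k, (∀ t, s < t → t < k → f t = 0) ∧ 2 * ∑ t ∈ range k, f t + 1 = f s := by
    induction k, hk using Nat.le_induction with
    | base => exact ⟨0, one_pos, fun t h1 h2 => by omega, by simp [h0]⟩
    | succ k hk ih =>
      obtain ⟨s, hsk, hzero, hs⟩ := ih
      rw [sum_range_succ]
      by_cases hfk : f k = 0
      · refine ⟨s, by omega, fun t hst htk => ?_, by rw [hfk]; linarith⟩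
        rcases Nat.lt_succ_iff_lt_or_eq.1 htk with htk | rfl
        exacts [hzero t hst htk, hfk]
      · have hne : f k ≠ f s := fun heq => by
          obtain ⟨t, ht0, htm, ht⟩ :=
            halt s (k - s) (by omega) (by omega) (by rwa [Nat.add_sub_cancel' hsk.le])
          rw [hzero (s + t) (by omega) (by omega)] at ht
          omega
        refine ⟨k, by omega, fun t h1 h2 => by omega, ?_⟩
        have := hval k
        have := hval s
        omega
  obtain ⟨s, -, -, hs⟩ := key
  have := hval s
  omega

variable {γ : ℕ} {e v : ZMod γ → ℤ} {I J : Finset (ZMod γ)}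

def CyclicallyAlternate (I J : Finset (ZMod γ)) : Prop :=
  (I = ∅ ∧ J = ∅) ∨
    (I.Nonempty ∧ J.Nonempty ∧ (∀ i ∈ I, #(openArc I i ∩ J) = 1) ∧
      (∀ i ∈ J, #(openArc J i ∩ I) = 1))

theorem exists_add_eq_neg_of_card_openArc_inter_eq_one {c : ℤ} (hI : ∀ j, j ∈ I ↔ e j = c)
    (hJ : ∀ j, j ∈ J ↔ e j = -c) (hIJ : ∀ i ∈ I, #(openArc I i ∩ J) = 1) {j : ZMod γ}
    (hj : e j = c) {m : ℕ} (hm : 0 < m) (hjm : e (j + m) = c) :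
    ∃ t, 0 < t ∧ t < m ∧ e (j + t) = -c := by
  obtain ⟨t, ht0, htm, ht⟩ := exists_add_mem_of_openArc_inter_nonempty
    (card_pos.1 ((hIJ j ((hI j).2 hj)).symm ▸ one_pos)) hm ((hI _).2 hjm)
  exact ⟨t, ht0, htm, (hJ _).1 ht⟩

theorem exists_add_eq_neg_of_alternating (hval : ∀ j, -1 ≤ e j ∧ e j ≤ 1)
    (hI : ∀ j, j ∈ I ↔ e j = -1) (hJ : ∀ j, j ∈ J ↔ e j = 1)
    (hIJ : ∀ i ∈ I, #(openArc I i ∩ J) = 1) (hJI : ∀ i ∈ J, #(openArc J i ∩ I) = 1)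
    {j : ZMod γ} {m : ℕ} (hm : 0 < m) (hj : e j ≠ 0) (hjm : e (j + m) = e j) :
    ∃ t, 0 < t ∧ t < m ∧ e (j + t) = -e j := by
  rcases (by have := hval j; omega : e j = -1 ∨ e j = 1) with hj' | hj'
  · rw [hj'] at hjm ⊢
    exact exists_add_eq_neg_of_card_openArc_inter_eq_one hI (by simpa using hJ) hIJ hj' hm hjm
  · rw [hj'] at hjm ⊢
    exact exists_add_eq_neg_of_card_openArc_inter_eq_one hJ hI hJI hj' hm hjm

variable [NeZero γ]

theorem card_openArc_inter_eq_one (hv : ∀ j, e j = v (j + 1) - v j)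
    (hosc : ∀ x y, v x ≤ v y + 1) (hI : ∀ j, j ∈ I ↔ e j = -1) (hJ : ∀ j, j ∈ J ↔ e j = 1)
    {i : ZMod γ} (hi : i ∈ I) : #(openArc I i ∩ J) = 1 := by
  set G := nextGap I i
  have hsum : ∑ t ∈ Ioo 0 G, e (i + t) = v (i + G) - v i - e i := by
    rw [← sum_range_eq_sub_of_potential hv, range_eq_Ico,
      sum_eq_sum_Ico_succ_bot (nextGap_pos hi), Ico_add_one_left_eq_Ioo, Nat.cast_zero, add_zero]
    ring
  -- the potential drops at both ends `i` and `i + G` of the arc, so it rises by one inside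
  have hrise : v (i + G) - v i - e i = 1 := by
    have hG := (hI _).1 (add_nextGap_mem hi)
    linarith [(hI i).1 hi, hv i, hv (i + G), hosc i (i + G + 1), hosc (i + G) (i + 1)]
  have hbool : ∀ t ∈ Ioo 0 G, e (i + t) = if i + (t : ZMod γ) ∈ J then 1 else 0 := by
    intro t ht
    have hnot := (hI _).not.1 (add_notMem_of_lt_nextGap (mem_Ioo.1 ht).1 (mem_Ioo.1 ht).2)
    have := hv (i + t)
    have := hosc (i + t) (i + t + 1)
    have := hosc (i + t + 1) (i + t)
    split_ifs with h <;> rw [hJ] at h <;> omega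
  rw [card_openArc_inter hi, ← Nat.cast_inj (R := ℤ), Nat.cast_one, ← sum_boole,
    ← sum_congr rfl hbool, hsum, hrise]

theorem eq_empty_of_eq_empty_of_sum_eq_zero (he0 : ∑ j, e j = 0) (hlow : ∀ j, -1 ≤ e j)
    (hI : ∀ j, j ∈ I ↔ e j = -1) (hJ : ∀ j, j ∈ J ↔ e j = 1) (hI0 : I = ∅) : J = ∅ := by
  have hnonneg : ∀ j ∈ univ, 0 ≤ e j := fun j _ => by
    have := (hI j).not.1 (by simp [hI0])
    have := hlow j
    omega
  refine eq_empty_of_forall_notMem fun j hj => ?_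
  have := (sum_eq_zero_iff_of_nonneg hnonneg).1 he0 j (mem_univ j)
  have := (hJ j).1 hj
  omega

theorem cyclicallyAlternate_of_forall_le_add_one (hv : ∀ j, e j = v (j + 1) - v j)
    (he0 : ∑ j, e j = 0) (hosc : ∀ x y, v x ≤ v y + 1) (hI : ∀ j, j ∈ I ↔ e j = -1)
    (hJ : ∀ j, j ∈ J ↔ e j = 1) : CyclicallyAlternate I J := by
  have hv' : ∀ j, -e j = -v (j + 1) - -v j := fun j => by rw [hv]; ring
  have hosc' : ∀ x y, -v x ≤ -v y + 1 := fun x y => by linarith [hosc y x]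
  have he0' : ∑ j, -e j = 0 := by rw [sum_neg_distrib, he0, neg_zero]
  have hI' : ∀ j, j ∈ J ↔ -e j = -1 := fun j => by rw [hJ, neg_inj]
  have hJ' : ∀ j, j ∈ I ↔ -e j = 1 := fun j => by rw [hI, neg_eq_iff_eq_neg]
  have hlow : ∀ j, -1 ≤ e j := fun j => by linarith [hv j, hosc j (j + 1)]
  have hlow' : ∀ j, -1 ≤ -e j := fun j => by linarith [hv j, hosc (j + 1) j]
  by_cases hI0 : I = ∅
  · exact .inl ⟨hI0, eq_empty_of_eq_empty_of_sum_eq_zero he0 hlow hI hJ hI0⟩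
  · have hJ0 : J ≠ ∅ := fun hJ0 =>
      hI0 (eq_empty_of_eq_empty_of_sum_eq_zero he0' hlow' hI' hJ' hJ0)
    exact .inr ⟨nonempty_iff_ne_empty.2 hI0, nonempty_iff_ne_empty.2 hJ0,
      fun i hi => card_openArc_inter_eq_one hv hosc hI hJ hi,
      fun i hi => card_openArc_inter_eq_one hv' hosc' hI' hJ' hi⟩

theorem forall_le_add_one_of_cyclicallyAlternate (hv : ∀ j, e j = v (j + 1) - v j)
    (hval : ∀ j, -1 ≤ e j ∧ e j ≤ 1) (hI : ∀ j, j ∈ I ↔ e j = -1) (hJ : ∀ j, j ∈ J ↔ e j = 1)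
    (halt : CyclicallyAlternate I J) (x y : ZMod γ) : v x ≤ v y + 1 := by
  rcases halt with ⟨hI0, hJ0⟩ | ⟨⟨b, hb⟩, -, hIJ, hJI⟩
  · have hzero : ∀ j, e j = 0 := fun j => by
      have := (hI j).not.1 (by simp [hI0])
      have := (hJ j).not.1 (by simp [hJ0])
      have := hval j
      omega
    have := sub_eq_sum_range_of_potential hv x y
    rw [sum_eq_zero fun t _ => hzero _] at this
    omega
  have hseq : ∀ s m : ℕ, 0 < m → e (b + s) ≠ 0 → e (b + (s + m : ℕ)) = e (b + s) →
      ∃ t, 0 < t ∧ t < m ∧ e (b + (s + t : ℕ)) = -e (b + s) := by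
    intro s m hm hs hsm
    push_cast at hsm ⊢
    simp only [← add_assoc] at hsm ⊢
    exact exists_add_eq_neg_of_alternating hval hI hJ hIJ hJI hm hs hsm
  have hpartial {k : ℕ} (hk : 0 < k) := sum_range_eq_neg_one_or_zero_of_alternating
    (fun t : ℕ => e (b + t)) (fun t => hval _) hseq (by simpa using (hI b).1 hb) hk
  have hbound : ∀ z, v b - 1 ≤ v z ∧ v z ≤ v b := fun z => by
    have := sub_eq_sum_range_of_potential hv z b
    rcases Nat.eq_zero_or_pos (z - b).val with h | h
    · rw [h, range_zero, sum_empty] at this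
      omega
    · rcases hpartial h with h' | h' <;> omega
  have := hbound x
  have := hbound y
  omega

theorem semistable_iff_cyclicallyAlternate (he0 : ∑ j, e j = 0) (hI : ∀ j, j ∈ I ↔ e j = -1)
    (hJ : ∀ j, j ∈ J ↔ e j = 1) :
    Semistable e ↔ (∀ j, -1 ≤ e j ∧ e j ≤ 1) ∧ CyclicallyAlternate I J := by
  obtain ⟨v, hv⟩ := exists_potential he0
  rw [semistable_iff_forall_le_add_one hv]
  refine ⟨fun hosc => ⟨fun j => ?_, cyclicallyAlternate_of_forall_le_add_one hv he0 hosc hI hJ⟩,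
    fun ⟨hval, halt⟩ => forall_le_add_one_of_cyclicallyAlternate hv hval hI hJ halt⟩
  constructor <;> linarith [hv j, hosc j (j + 1), hosc (j + 1) j]

end Alternation

end CircularCurve

open CircularCurve in
theorem circular_semistable_iff_general (γ : ℕ) [NeZero γ]
    (g : ZMod γ → ℕ) (d : ZMod γ → ℤ)
    (htotal : ∑ i, d i = ∑ i, (g i : ℤ)) :
    (∀ S : Finset (ZMod γ), S.Nonempty → S ≠ Finset.univ →
        (∑ i ∈ S, d i) ≥ (∑ i ∈ S, (g i : ℤ)) - nCirc S) ↔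
      ((∀ i, (g i : ℤ) - 1 ≤ d i ∧ d i ≤ (g i : ℤ) + 1) ∧
        (letI Iminus := Finset.univ.filter (fun i => d i = (g i : ℤ) - 1)
         letI Iplus := Finset.univ.filter (fun i => d i = (g i : ℤ) + 1)
         (Iminus = ∅ ∧ Iplus = ∅) ∨
           (Iminus.Nonempty ∧ Iplus.Nonempty ∧
             (∀ i ∈ Iminus, ((openArc Iminus i) ∩ Iplus).card = 1) ∧
             (∀ i ∈ Iplus, ((openArc Iplus i) ∩ Iminus).card = 1)))) := by
  set e : ZMod γ → ℤ := fun i => d i - g i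
  have he0 : ∑ i, e i = 0 := by rw [sum_sub_distrib, htotal, sub_self]
  have hsemistable : (∀ S : Finset (ZMod γ), S.Nonempty → S ≠ univ →
      (∑ i ∈ S, d i) ≥ (∑ i ∈ S, (g i : ℤ)) - nCirc S) ↔ Semistable e :=
    forall₃_congr fun S _ _ => by rw [sum_sub_distrib]; omega
  rw [hsemistable, semistable_iff_cyclicallyAlternate he0
    (I := univ.filter fun i => d i = g i - 1) (J := univ.filter fun i => d i = g i + 1)
    (fun j => by simp only [mem_filter, mem_univ, true_and, e]; omega)
    (fun j => by simp only [mem_filter, mem_univ, true_and, e]; omega)]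
  exact and_congr (forall_congr' fun j => by simp only [e]; omega) Iff.rfl

/-- Lemma 4.2: a multidegree `d` of total degree `g − 1` on a circular curve is semistable
iff (a) `g i − 1 ≤ d i ≤ g i + 1` for all `i`, and (b) either `I⁺ = I⁻ = ∅` or the elements
of `I⁺` and `I⁻` alternate in cyclic order. -/
theorem circular_semistable_iff (γ : ℕ) [NeZero γ] (hγ : 3 ≤ γ)
    (g : ZMod γ → ℕ) (d : ZMod γ → ℤ)
    (htotal : ∑ i, d i = ∑ i, (g i : ℤ)) :
    (∀ S : Finset (ZMod γ), S.Nonempty → S ≠ Finset.univ →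
        (∑ i ∈ S, d i) ≥ (∑ i ∈ S, (g i : ℤ)) - nCirc S) ↔
      ((∀ i, (g i : ℤ) - 1 ≤ d i ∧ d i ≤ (g i : ℤ) + 1) ∧
        (letI Iminus := Finset.univ.filter (fun i => d i = (g i : ℤ) - 1)
         letI Iplus := Finset.univ.filter (fun i => d i = (g i : ℤ) + 1)
         (Iminus = ∅ ∧ Iplus = ∅) ∨
           (Iminus.Nonempty ∧ Iplus.Nonempty ∧
             (∀ i ∈ Iminus, ((openArc Iminus i) ∩ Iplus).card = 1) ∧
             (∀ i ∈ Iplus, ((openArc Iplus i) ∩ Iminus).card = 1)))) :=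
  circular_semistable_iff_general γ g d htotal
end

section
/- Assume g_i ≥ 1 for all i ∈ ℤ/γℤ. Let ℓ ≥ 1 and let integers satisfy 1 = k_1 < j_1 < k_2 < j_2 < ⋯ < k_ℓ < j_ℓ ≤ γ, and set k_{ℓ+1} := γ + 1. Define the multidegree d on C by d_i = g_i − 1 if i ≡ k_r (mod γ) for some r, d_i = g_i + 1 if i ≡ j_r (mod γ) for some r, and d_i = g_i otherwise. Then d is effective (d_i ≥ 0 for all i), and the number of admissible subsets Z ⊆ ℤ/γℤ equals 1 + Σ_{1 ≤ r, s ≤ ℓ} (j_r − k_r)(k_{s+1} − j_s). (Proposition 4.3 of the paper: this number is the number of irreducible components of the Brill–Noether locus W_d(C).) -/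
/-!
Let `B ⊆ ℤ/γℤ` be the set of residues of the blocks `[k_r, j_r)` and `χ` its indicator. The
multidegree is `d_i = g_i + χ(i - 1) - χ(i)`, so on any subcurve `Y` the excess `∑_Y (d_i - g_i)`
telescopes to a sum over the endpoints of the components of `Y` and is at least `-n_Y`; hence the
whole curve is admissible. A proper connected `Z` is an arc `[a, b]`, and for it the degree
condition reads `χ(a - 1) - χ(b) = 1`, i.e. `a - 1 ∈ B` and `b ∉ B`; semistability then follows from
the same telescoping, and effectivity from `g_i ≥ 1`. So there are `1 + |B| |Bᶜ|` admissible
subsets, where `|B| = ∑ (j_r - k_r)` and `|Bᶜ| = γ - |B| = ∑ (k_{s+1} - j_s)`.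
-/

open Finset

/-- The multidegree `e` on the subcurve `Z` obtained from `d` by subtracting the points of
intersection of `Z` with its complement: `e i = d i − [i−1 ∉ Z] − [i+1 ∉ Z]`. -/
def eMult {γ : ℕ} (d : ZMod γ → ℤ) (Z : Finset (ZMod γ)) (i : ZMod γ) : ℤ :=
  d i - (if i - 1 ∈ Z then 0 else 1) - (if i + 1 ∈ Z then 0 else 1)

/-- The genus of the subcurve of the circular curve indexed by `Z`: it is `Σ_{i∈Z} g i`
for proper `Z`, and the total genus `1 + Σ_i g i` for `Z = ℤ/γℤ`. -/
def gSub {γ : ℕ} [NeZero γ] (g : ZMod γ → ℕ) (Z : Finset (ZMod γ)) : ℤ :=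
  if Z = Finset.univ then 1 + ∑ i, (g i : ℤ) else ∑ i ∈ Z, (g i : ℤ)

/-- `Z` is admissible for the multidegree `d` if `Z` is nonempty and connected, and the
multidegree `e = eMult d Z` is effective on `Z`, of total degree `g_Z − 1` on `Z`, and
semistable on `Z`. -/
def Admissible {γ : ℕ} [NeZero γ] (g : ZMod γ → ℕ) (d : ZMod γ → ℤ)
    (Z : Finset (ZMod γ)) : Prop :=
  Z.Nonempty ∧ (Z = Finset.univ ∨ nCirc Z = 1) ∧
    (∀ i ∈ Z, 0 ≤ eMult d Z i) ∧
    (∑ i ∈ Z, eMult d Z i = gSub g Z - 1) ∧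
    ∀ Y : Finset (ZMod γ), Y ⊆ Z → Y.Nonempty → Y ≠ Z →
      (∑ i ∈ Y, eMult d Z i) ≥ (∑ i ∈ Y, (g i : ℤ)) - nCirc Y

namespace ZMod

variable {γ : ℕ}

lemma natCast_injOn_Icc : Set.InjOn (Nat.cast : ℕ → ZMod γ) (Set.Icc 1 γ) := by
  rintro a ⟨ha1, ha2⟩ b ⟨hb1, hb2⟩ h
  have h' : ((a - 1 : ℕ) : ZMod γ) = ((b - 1 : ℕ) : ZMod γ) := by
    rw [Nat.cast_pred ha1, Nat.cast_pred hb1, h]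
  have := congrArg val h'
  rw [val_cast_of_lt (by omega), val_cast_of_lt (by omega)] at this
  omega

variable [NeZero γ]

lemma val_sub_one_of_ne_zero {y : ZMod γ} (hy : y ≠ 0) : (y - 1).val = y.val - 1 := by
  have h1 : 1 ≤ y.val := Nat.one_le_iff_ne_zero.2 ((val_ne_zero y).2 hy)
  have hcast : y - 1 = ((y.val - 1 : ℕ) : ZMod γ) := by
    rw [Nat.cast_pred h1, natCast_zmod_val]
  rw [hcast, val_cast_of_lt (by have := y.val_lt; omega)]

lemma val_add_one_of_lt {y : ZMod γ} (h : y.val + 1 < γ) : (y + 1).val = y.val + 1 := by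
  rw [← val_cast_of_lt h, Nat.cast_succ, natCast_zmod_val]

lemma val_add_one_lt {y : ZMod γ} (h : y + 1 ≠ 0) : y.val + 1 < γ := by
  refine lt_of_le_of_ne y.val_lt (fun hγ => h ?_)
  rw [← natCast_zmod_val y, ← Nat.cast_add_one, hγ, natCast_self]

lemma val_neg_one_of_neZero : (-1 : ZMod γ).val = γ - 1 := by
  obtain ⟨n, rfl⟩ := Nat.exists_eq_add_one_of_ne_zero (NeZero.ne γ)
  exact val_neg_one n

end ZMod

section Arc

variable {γ : ℕ} [NeZero γ]

-- The arc `a, a + 1, …, b` of `ℤ/γℤ`.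
def arc (a b : ZMod γ) : Finset (ZMod γ) :=
  univ.filter fun x => (x - a).val ≤ (b - a).val

lemma mem_arc {a b x : ZMod γ} : x ∈ arc a b ↔ (x - a).val ≤ (b - a).val := by
  simp [arc]

lemma left_mem_arc (a b : ZMod γ) : a ∈ arc a b := by
  simp [mem_arc]

lemma right_mem_arc (a b : ZMod γ) : b ∈ arc a b := mem_arc.2 le_rfl

lemma arc_eq_univ {a b : ZMod γ} (h : b + 1 = a) : arc a b = univ := by
  ext x
  rw [mem_arc, show b - a = -1 by linear_combination h, ZMod.val_neg_one_of_neZero]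
  simpa using Nat.le_sub_one_of_lt (x - a).val_lt

lemma exists_eq_arc {Z : Finset (ZMod γ)} (hZ : Z.Nonempty) (h : nCirc Z = 1) :
    ∃ a b, Z = arc a b := by
  obtain ⟨a, ha⟩ := card_eq_one.1 h
  have hleft : ∀ x ∈ Z, x - 1 ∉ Z → x = a := fun x hx hx' =>
    mem_singleton.1 (ha ▸ mem_filter.2 ⟨hx, hx'⟩)
  -- Descending from `x ∈ Z` stays in `Z` until it reaches `a`, the only left end of `Z`.
  have hsub : ∀ n, ∀ x ∈ Z, (x - a).val = n → arc a x ⊆ Z := by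
    intro n
    induction n with
    | zero =>
      intro x hx hn y hy
      rw [mem_arc, hn, Nat.le_zero, ZMod.val_eq_zero, sub_eq_zero] at hy
      rw [hy, ← sub_eq_zero.1 ((ZMod.val_eq_zero _).1 hn)]
      exact hx
    | succ n ih =>
      intro x hx hn y hy
      have hxa : x ≠ a := by rintro rfl; simp at hn
      have hx1 : x - 1 ∈ Z := by_contra fun h => hxa (hleft x hx h)
      have hn' : (x - 1 - a).val = n := by
        rw [sub_right_comm, ZMod.val_sub_one_of_ne_zero (sub_ne_zero.2 hxa), hn, Nat.add_sub_cancel]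
      rw [mem_arc, hn] at hy
      rcases hy.lt_or_eq with hlt | heq
      · exact ih _ hx1 hn' (mem_arc.2 (by omega))
      · rwa [sub_left_injective (ZMod.val_injective γ (heq.trans hn.symm))]
  obtain ⟨b, hb, hmax⟩ := Z.exists_max_image (fun x => (x - a).val) hZ
  exact ⟨a, b, subset_antisymm (fun x hx => mem_arc.2 (hmax x hx)) (hsub _ b hb rfl)⟩

section ProperArc

variable {a b : ZMod γ} (hab : b + 1 ≠ a)
include hab

lemma sub_one_mem_arc_iff {x : ZMod γ} (hx : x ∈ arc a b) : x - 1 ∈ arc a b ↔ x ≠ a := by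
  rw [mem_arc] at hx ⊢
  have := ZMod.val_add_one_lt (y := b - a) fun h => hab (by linear_combination h)
  rw [sub_right_comm]
  constructor
  · rintro h rfl
    rw [sub_self, zero_sub, ZMod.val_neg_one_of_neZero] at h
    omega
  · intro h
    rw [ZMod.val_sub_one_of_ne_zero (sub_ne_zero.2 h)]
    omega

lemma add_one_mem_arc_iff {x : ZMod γ} (hx : x ∈ arc a b) : x + 1 ∈ arc a b ↔ x ≠ b := by
  rw [mem_arc] at hx ⊢
  have := ZMod.val_add_one_lt (y := b - a) fun h => hab (by linear_combination h)
  have hval : x = b ↔ (x - a).val = (b - a).val :=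
    ⟨by rintro rfl; rfl, fun h => sub_left_injective (ZMod.val_injective γ h)⟩
  rw [add_sub_right_comm, ZMod.val_add_one_of_lt (by omega), Ne, hval]
  omega

lemma sub_one_left_notMem_arc : a - 1 ∉ arc a b := fun h =>
  (sub_one_mem_arc_iff hab (left_mem_arc a b)).1 h rfl

lemma add_one_right_notMem_arc : b + 1 ∉ arc a b := fun h =>
  (add_one_mem_arc_iff hab (right_mem_arc a b)).1 h rfl

lemma filter_sub_one_notMem_arc : (arc a b).filter (fun x => x - 1 ∉ arc a b) = {a} := by
  ext x
  simp only [mem_filter, mem_singleton]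
  refine ⟨fun ⟨hx, hx'⟩ => ?_, ?_⟩
  · by_contra h
    exact hx' ((sub_one_mem_arc_iff hab hx).2 h)
  · rintro rfl
    exact ⟨left_mem_arc _ _, sub_one_left_notMem_arc hab⟩

lemma filter_add_one_notMem_arc : (arc a b).filter (fun x => x + 1 ∉ arc a b) = {b} := by
  ext x
  simp only [mem_filter, mem_singleton]
  refine ⟨fun ⟨hx, hx'⟩ => ?_, ?_⟩
  · by_contra h
    exact hx' ((add_one_mem_arc_iff hab hx).2 h)
  · rintro rfl
    exact ⟨right_mem_arc _ _, add_one_right_notMem_arc hab⟩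

lemma nCirc_arc : nCirc (arc a b) = 1 := by
  rw [nCirc, filter_sub_one_notMem_arc hab, card_singleton]

lemma arc_ne_univ : arc a b ≠ univ := fun h =>
  sub_one_left_notMem_arc hab (h ▸ mem_univ _)

end ProperArc

lemma arc_inj {a b a' b' : ZMod γ} (hab : b + 1 ≠ a) (hab' : b' + 1 ≠ a')
    (h : arc a b = arc a' b') : a = a' ∧ b = b' := by
  constructor
  · rw [← singleton_inj, ← filter_sub_one_notMem_arc hab, ← filter_sub_one_notMem_arc hab', h]
  · rw [← singleton_inj, ← filter_add_one_notMem_arc hab, ← filter_add_one_notMem_arc hab', h]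

end Arc

section Telescoping

variable {γ : ℕ}

lemma sum_sub_one_sub_eq {M : Type*} [AddCommGroup M] (F : ZMod γ → M) (Y : Finset (ZMod γ)) :
    ∑ i ∈ Y, (F (i - 1) - F i) =
      ∑ i ∈ Y with i - 1 ∉ Y, F (i - 1) - ∑ i ∈ Y with i + 1 ∉ Y, F i := by
  have hshift : ∑ i ∈ Y with i - 1 ∈ Y, F (i - 1) = ∑ i ∈ Y with i + 1 ∈ Y, F i :=
    sum_nbij' (· - 1) (· + 1) (by simp +contextual) (by simp +contextual) (by simp) (by simp)
      (fun _ _ => rfl)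
  rw [sum_sub_distrib, ← sum_filter_add_sum_filter_not Y (fun i => i - 1 ∈ Y),
    ← sum_filter_add_sum_filter_not Y (fun i => i + 1 ∈ Y), hshift]
  abel

lemma nCirc_eq_card_filter_add_one_notMem (Y : Finset (ZMod γ)) :
    nCirc Y = #{i ∈ Y | i + 1 ∉ Y} := by
  have := sum_sub_one_sub_eq (fun _ => (1 : ℤ)) Y
  simp only [sub_self, sum_const_zero, sum_const, nsmul_eq_mul, mul_one] at this
  rw [nCirc]
  omega

variable (B : Finset (ZMod γ))

lemma neg_nCirc_le_sum_ite (Y : Finset (ZMod γ)) :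
    -(nCirc Y : ℤ) ≤ ∑ i ∈ Y, ((if i - 1 ∈ B then 1 else 0) - (if i ∈ B then 1 else 0)) := by
  have := sum_sub_one_sub_eq (fun i => if i ∈ B then (1 : ℤ) else 0) Y
  simp only [sum_boole] at this
  rw [this, nCirc_eq_card_filter_add_one_notMem]
  have := card_filter_le {i ∈ Y | i + 1 ∉ Y} (· ∈ B)
  omega

lemma le_sum_ite_of_subset_arc [NeZero γ] {a b : ZMod γ} (hab : b + 1 ≠ a) (ha : a - 1 ∈ B)
    (hb : b ∉ B) {Y : Finset (ZMod γ)} (hY : Y ⊆ arc a b) :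
    (if a ∈ Y then 1 else 0) + (if b ∈ Y then 1 else 0) - (nCirc Y : ℤ) ≤
      ∑ i ∈ Y, ((if i - 1 ∈ B then 1 else 0) - (if i ∈ B then 1 else 0)) := by
  have := sum_sub_one_sub_eq (fun i => if i ∈ B then (1 : ℤ) else 0) Y
  simp only [sum_boole] at this
  rw [this, nCirc_eq_card_filter_add_one_notMem]
  have hleft : (if a ∈ Y then 1 else 0 : ℤ) ≤ #{i ∈ {i ∈ Y | i - 1 ∉ Y} | i - 1 ∈ B} := by
    split_ifs with haY
    · exact_mod_cast card_pos.2
        ⟨a, mem_filter.2 ⟨mem_filter.2 ⟨haY, fun h => sub_one_left_notMem_arc hab (hY h)⟩, ha⟩⟩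
    · positivity
  have hright : (#{i ∈ {i ∈ Y | i + 1 ∉ Y} | i ∈ B} : ℤ) + (if b ∈ Y then 1 else 0) ≤
      #{i ∈ Y | i + 1 ∉ Y} := by
    split_ifs with hbY
    · exact_mod_cast card_lt_card (filter_ssubset.2
        ⟨b, mem_filter.2 ⟨hbY, fun h => add_one_right_notMem_arc hab (hY h)⟩, hb⟩)
    · simpa using card_filter_le _ _
  linarith

end Telescoping

section ArcMultidegree

variable {γ : ℕ} [NeZero γ] {a b : ZMod γ} (hab : b + 1 ≠ a) (d : ZMod γ → ℤ)
include hab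

lemma eMult_arc {x : ZMod γ} (hx : x ∈ arc a b) :
    eMult d (arc a b) x = d x - (if x = a then 1 else 0) - (if x = b then 1 else 0) := by
  simp only [eMult, sub_one_mem_arc_iff hab hx, add_one_mem_arc_iff hab hx, ne_eq, ite_not]

lemma sum_eMult_arc {Y : Finset (ZMod γ)} (hY : Y ⊆ arc a b) :
    ∑ i ∈ Y, eMult d (arc a b) i =
      ∑ i ∈ Y, d i - (if a ∈ Y then 1 else 0) - (if b ∈ Y then 1 else 0) := by
  rw [sum_congr rfl fun i hi => eMult_arc hab d (hY hi), sum_sub_distrib, sum_sub_distrib,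
    sum_ite_eq', sum_ite_eq']

end ArcMultidegree

lemma add_one_ne_add_one_of_mem_of_notMem {α : Type*} [AddRightCancelSemigroup α] [One α]
    {B : Finset α} {c b : α} (hc : c ∈ B) (hb : b ∉ B) : b + 1 ≠ c + 1 :=
  fun h => ne_of_mem_of_not_mem hc hb (add_right_cancel h).symm

section Count

variable {γ : ℕ} [NeZero γ] {g : ZMod γ → ℕ} {d : ZMod γ → ℤ} {B : Finset (ZMod γ)}
  (hd : ∀ i, d i = g i + (if i - 1 ∈ B then 1 else 0) - (if i ∈ B then 1 else 0))
include hd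

omit [NeZero γ] in
lemma sum_eq_sum_add_sum_ite (Y : Finset (ZMod γ)) :
    ∑ i ∈ Y, d i = ∑ i ∈ Y, (g i : ℤ) +
      ∑ i ∈ Y, ((if i - 1 ∈ B then 1 else 0) - (if i ∈ B then 1 else 0)) := by
  rw [← sum_add_distrib]
  exact sum_congr rfl fun i _ => by rw [hd]; ring

lemma sum_arc_eq {a b : ZMod γ} (hab : b + 1 ≠ a) :
    ∑ i ∈ arc a b, d i = ∑ i ∈ arc a b, (g i : ℤ) +
      ((if a - 1 ∈ B then 1 else 0) - (if b ∈ B then 1 else 0)) := by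
  rw [sum_eq_sum_add_sum_ite hd, sum_sub_one_sub_eq (fun i => if i ∈ B then (1 : ℤ) else 0),
    filter_sub_one_notMem_arc hab, filter_add_one_notMem_arc hab, sum_singleton, sum_singleton]

lemma admissible_univ (hg : ∀ i, 1 ≤ g i) : Admissible g d univ := by
  have heMult : ∀ i, eMult d univ i = d i := by simp [eMult]
  refine ⟨univ_nonempty, Or.inl rfl, fun i _ => ?_, ?_, fun Y _ _ _ => ?_⟩
  · rw [heMult, hd]
    have := hg i
    split_ifs <;> omega
  · have := sum_sub_one_sub_eq (fun i => if i ∈ B then (1 : ℤ) else 0) univ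
    simp only [mem_univ, not_true_eq_false, filter_false, sum_empty, sub_self] at this
    simp only [heMult, gSub, if_pos, sum_eq_sum_add_sum_ite hd, this]
    ring
  · simp only [heMult, sum_eq_sum_add_sum_ite hd]
    linarith [neg_nCirc_le_sum_ite B Y]

lemma admissible_arc (hg : ∀ i, 1 ≤ g i) {c b : ZMod γ} (hc : c ∈ B) (hb : b ∉ B) :
    Admissible g d (arc (c + 1) b) := by
  have hab := add_one_ne_add_one_of_mem_of_notMem hc hb
  refine ⟨⟨_, left_mem_arc _ _⟩, Or.inr (nCirc_arc hab), fun i hi => ?_, ?_, fun Y hY _ _ => ?_⟩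
  · rw [eMult_arc hab d hi, hd]
    have hleft : (if i = c + 1 then 1 else 0 : ℤ) ≤ if i - 1 ∈ B then 1 else 0 := by
      split_ifs <;> simp_all
    have hright : (if i ∈ B then 1 else 0 : ℤ) + (if i = b then 1 else 0) ≤ 1 := by
      split_ifs <;> simp_all
    have := hg i
    linarith
  · rw [sum_eMult_arc hab d Subset.rfl, sum_arc_eq hd hab, gSub, if_neg (arc_ne_univ hab),
      add_sub_cancel_right, if_pos hc, if_neg hb, if_pos (left_mem_arc _ _),
      if_pos (right_mem_arc _ _)]
    ring
  · rw [sum_eMult_arc hab d hY, sum_eq_sum_add_sum_ite hd]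
    have := le_sum_ite_of_subset_arc B hab (by rwa [add_sub_cancel_right]) hb hY
    linarith

lemma eq_univ_or_arc_of_admissible {Z : Finset (ZMod γ)} (hZ : Admissible g d Z) :
    Z = univ ∨ ∃ c ∈ B, ∃ b ∉ B, Z = arc (c + 1) b := by
  obtain ⟨hne, huniv | hconn, -, hdeg, -⟩ := hZ
  · exact Or.inl huniv
  obtain ⟨a, b, rfl⟩ := exists_eq_arc hne hconn
  by_cases hab : b + 1 = a
  · exact Or.inl (arc_eq_univ hab)
  rw [sum_eMult_arc hab d Subset.rfl, sum_arc_eq hd hab, gSub, if_neg (arc_ne_univ hab),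
    if_pos (left_mem_arc _ _), if_pos (right_mem_arc _ _)] at hdeg
  have hχ : (if a - 1 ∈ B then 1 else 0 : ℤ) - (if b ∈ B then 1 else 0) = 1 := by linarith
  refine Or.inr ⟨a - 1, ?_, b, ?_, by rw [sub_add_cancel]⟩ <;> split_ifs at hχ <;> simp_all

lemma admissible_iff (hg : ∀ i, 1 ≤ g i) {Z : Finset (ZMod γ)} :
    Admissible g d Z ↔ Z = univ ∨ ∃ c ∈ B, ∃ b ∉ B, Z = arc (c + 1) b := by
  refine ⟨eq_univ_or_arc_of_admissible hd, ?_⟩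
  rintro (rfl | ⟨c, hc, b, hb, rfl⟩)
  · exact admissible_univ hd hg
  · exact admissible_arc hd hg hc hb

theorem ncard_setOf_admissible (hg : ∀ i, 1 ≤ g i) :
    {Z | Admissible g d Z}.ncard = 1 + #B * #Bᶜ := by
  let arcs := (B ×ˢ Bᶜ).image fun p => arc (p.1 + 1) p.2
  have hset : {Z | Admissible g d Z} = ↑(insert univ arcs) := by
    ext Z
    simp [arcs, admissible_iff hd hg, eq_comm, and_assoc]
  have hinj : Set.InjOn (fun p : ZMod γ × ZMod γ => arc (p.1 + 1) p.2) ↑(B ×ˢ Bᶜ) := by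
    rintro ⟨c, b⟩ hcb ⟨c', b'⟩ hcb' h
    simp only [coe_product, Set.mem_prod, mem_coe, mem_compl] at hcb hcb'
    obtain ⟨hc, hb⟩ := arc_inj (add_one_ne_add_one_of_mem_of_notMem hcb.1 hcb.2)
      (add_one_ne_add_one_of_mem_of_notMem hcb'.1 hcb'.2) h
    exact Prod.ext (add_right_cancel hc) hb
  have huniv : univ ∉ arcs := by
    simp only [arcs, mem_image, mem_product, mem_compl, not_exists, not_and]
    exact fun p hp => arc_ne_univ (add_one_ne_add_one_of_mem_of_notMem hp.1 hp.2)
  rw [hset, Set.ncard_coe_finset, card_insert_of_notMem huniv, card_image_of_injOn hinj,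
    card_product, add_comm]

end Count

section Blocks

variable {ℓ : ℕ} {k j : ℕ → ℕ}

def blocks (ℓ : ℕ) (k j : ℕ → ℕ) : Finset ℕ :=
  (Icc 1 ℓ).biUnion fun r => Ico (k r) (j r)

lemma mem_blocks {m : ℕ} : m ∈ blocks ℓ k j ↔ ∃ r ∈ Icc 1 ℓ, k r ≤ m ∧ m < j r := by
  simp [blocks]

lemma exists_k_eq_of_succ_mem_blocks {m : ℕ} (h1 : m + 1 ∈ blocks ℓ k j)
    (h0 : m ∉ blocks ℓ k j) : ∃ r ∈ Icc 1 ℓ, k r = m + 1 := by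
  obtain ⟨r, hr, hk, hj⟩ := mem_blocks.1 h1
  exact ⟨r, hr, le_antisymm hk (not_lt.1 fun h => h0 (mem_blocks.2 ⟨r, hr, by omega, by omega⟩))⟩

lemma exists_j_eq_of_mem_blocks {m : ℕ} (h0 : m ∈ blocks ℓ k j)
    (h1 : m + 1 ∉ blocks ℓ k j) : ∃ r ∈ Icc 1 ℓ, j r = m + 1 := by
  obtain ⟨r, hr, hk, hj⟩ := mem_blocks.1 h0
  exact ⟨r, hr, le_antisymm (not_lt.1 fun h => h1 (mem_blocks.2 ⟨r, hr, by omega, h⟩)) hj⟩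

def Interlaced (ℓ : ℕ) (k j : ℕ → ℕ) : Prop :=
  ∀ r ∈ Icc 1 ℓ, k r < j r ∧ j r < k (r + 1)

namespace Interlaced

variable (H : Interlaced ℓ k j)
include H

lemma strictMonoOn_k : StrictMonoOn k (Set.Icc 1 (ℓ + 1)) :=
  strictMonoOn_of_lt_succ Set.ordConnected_Icc fun r _ hr hr' => by
    simp only [Order.succ_eq_add_one, Set.mem_Icc] at hr hr' ⊢
    have := H r (mem_Icc.2 ⟨hr.1, by omega⟩)
    omega

lemma j_lt_k {r s : ℕ} (hr : 1 ≤ r) (hrs : r < s) (hs : s ≤ ℓ + 1) : j r < k s :=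
  (H r (mem_Icc.2 ⟨hr, by omega⟩)).2.trans_le
    (H.strictMonoOn_k.monotoneOn ⟨by omega, by omega⟩ ⟨by omega, hs⟩ hrs)

lemma k_mem_blocks {r : ℕ} (hr : r ∈ Icc 1 ℓ) : k r ∈ blocks ℓ k j :=
  mem_blocks.2 ⟨r, hr, le_rfl, (H r hr).1⟩

lemma notMem_blocks_of_succ_eq_k {r m : ℕ} (hr : r ∈ Icc 1 ℓ) (hm : m + 1 = k r) :
    m ∉ blocks ℓ k j := by
  rw [mem_blocks]
  rintro ⟨s, hs, hks, hjs⟩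
  rw [mem_Icc] at hr hs
  rcases lt_trichotomy s r with h | rfl | h
  · have := H.j_lt_k hs.1 h (by omega)
    omega
  · omega
  · have := H.strictMonoOn_k ⟨hr.1, by omega⟩ ⟨hs.1, by omega⟩ h
    omega

lemma mem_blocks_of_succ_eq_j {r m : ℕ} (hr : r ∈ Icc 1 ℓ) (hm : m + 1 = j r) :
    m ∈ blocks ℓ k j :=
  mem_blocks.2 ⟨r, hr, by have := (H r hr).1; omega, by omega⟩

lemma j_notMem_blocks {r : ℕ} (hr : r ∈ Icc 1 ℓ) : j r ∉ blocks ℓ k j := by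
  rw [mem_blocks]
  rintro ⟨s, hs, hks, hjs⟩
  rw [mem_Icc] at hr hs
  rcases lt_trichotomy s r with h | rfl | h
  · have := H.j_lt_k hs.1 h (by omega)
    have := (H r (mem_Icc.2 hr)).1
    omega
  · omega
  · have := H.j_lt_k hr.1 h (by omega)
    omega

lemma bounds_of_mem_blocks {m : ℕ} (hm : m ∈ blocks ℓ k j) : k 1 ≤ m ∧ m + 1 < k (ℓ + 1) := by
  obtain ⟨r, hr, hk, hj⟩ := mem_blocks.1 hm
  rw [mem_Icc] at hr
  have h1 := H.strictMonoOn_k.monotoneOn ⟨le_rfl, by omega⟩ ⟨hr.1, by omega⟩ hr.1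
  have h2 := H.j_lt_k hr.1 (by omega : r < ℓ + 1) le_rfl
  omega

lemma card_blocks : #(blocks ℓ k j) = ∑ r ∈ Icc 1 ℓ, (j r - k r) := by
  rw [blocks, card_biUnion]
  · exact sum_congr rfl fun r _ => Nat.card_Ico _ _
  · intro r hr s hs hrs
    simp only [coe_Icc, Set.mem_Icc] at hr hs
    refine disjoint_left.2 fun m hmr hms => ?_
    rw [mem_Ico] at hmr hms
    rcases lt_or_gt_of_ne hrs with h | h
    · have := H.j_lt_k hr.1 h (by omega)
      omega
    · have := H.j_lt_k hs.1 h (by omega)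
      omega

lemma sum_sub_add_sum_sub :
    ∑ r ∈ Icc 1 ℓ, (j r - k r) + ∑ r ∈ Icc 1 ℓ, (k (r + 1) - j r) = k (ℓ + 1) - k 1 := by
  rcases Nat.eq_zero_or_pos ℓ with rfl | hℓ
  · simp
  have hk := H.strictMonoOn_k.monotoneOn ⟨le_rfl, by omega⟩ ⟨by omega, le_rfl⟩ (by omega)
  apply Nat.cast_injective (R := ℤ)
  rw [← sum_add_distrib, Nat.cast_sum, Nat.cast_sub hk,
    ← sum_Icc_sub (by omega : 1 ≤ ℓ) fun r => (k r : ℤ)]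
  refine sum_congr rfl fun r hr => ?_
  have := H r hr
  omega

end Interlaced

end Blocks

section Bridge

variable {γ : ℕ}

lemma natCast_mem_image_natCast_iff {A : Finset ℕ} (hA : A ⊆ Ico 1 γ) {m : ℕ} (hm : m ≤ γ) :
    (m : ZMod γ) ∈ A.image Nat.cast ↔ m ∈ A := by
  refine ⟨fun h => ?_, mem_image_of_mem _⟩
  obtain ⟨a, ha, hcast⟩ := mem_image.1 h
  have ha' := mem_Ico.1 (hA ha)
  rcases Nat.eq_zero_or_pos m with rfl | hm0
  · rw [Nat.cast_zero, ← ZMod.natCast_self] at hcast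
    have := ZMod.natCast_injOn_Icc ⟨ha'.1, ha'.2.le⟩ ⟨by omega, le_rfl⟩ hcast
    omega
  · rwa [← ZMod.natCast_injOn_Icc ⟨ha'.1, ha'.2.le⟩ ⟨hm0, hm⟩ hcast]

variable {ℓ : ℕ} {k j : ℕ → ℕ}

namespace Interlaced

variable (H : Interlaced ℓ k j) (hk1 : k 1 = 1) (hkl : k (ℓ + 1) = γ + 1)
include H hk1 hkl

lemma blocks_subset_Ico : blocks ℓ k j ⊆ Ico 1 γ := fun m hm => by
  have := H.bounds_of_mem_blocks hm
  rw [mem_Ico]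
  omega

lemma k_mem_Icc {r : ℕ} (hr : r ∈ Icc 1 ℓ) : k r ∈ Set.Icc 1 γ := by
  have := H.bounds_of_mem_blocks (H.k_mem_blocks hr)
  exact ⟨by omega, by omega⟩

omit hk1 in
lemma j_mem_Icc {r : ℕ} (hr : r ∈ Icc 1 ℓ) : j r ∈ Set.Icc 1 γ := by
  have := (H r hr).1
  have := H.j_lt_k (mem_Icc.1 hr).1 (by simp at hr; omega : r < ℓ + 1) le_rfl
  exact ⟨by omega, by omega⟩

lemma card_image_blocks :
    #((blocks ℓ k j).image (Nat.cast : ℕ → ZMod γ)) = ∑ r ∈ Icc 1 ℓ, (j r - k r) := by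
  rw [card_image_of_injOn, H.card_blocks]
  exact ZMod.natCast_injOn_Icc.mono fun m hm =>
    Set.Ico_subset_Icc_self (by simpa using H.blocks_subset_Ico hk1 hkl hm)

lemma eq_add_ite_sub_ite [NeZero γ] {g : ZMod γ → ℕ} {d : ZMod γ → ℤ}
    (hdk : ∀ r, 1 ≤ r → r ≤ ℓ → d ((k r : ZMod γ)) = (g ((k r : ZMod γ)) : ℤ) - 1)
    (hdj : ∀ r, 1 ≤ r → r ≤ ℓ → d ((j r : ZMod γ)) = (g ((j r : ZMod γ)) : ℤ) + 1)
    (hdo : ∀ i : ZMod γ, (¬ ∃ r, 1 ≤ r ∧ r ≤ ℓ ∧ i = (k r : ZMod γ)) →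
      (¬ ∃ r, 1 ≤ r ∧ r ≤ ℓ ∧ i = (j r : ZMod γ)) → d i = (g i : ℤ)) (i : ZMod γ) :
    d i = g i + (if i - 1 ∈ (blocks ℓ k j).image Nat.cast then 1 else 0) -
      (if i ∈ (blocks ℓ k j).image Nat.cast then 1 else 0) := by
  have hA := H.blocks_subset_Ico hk1 hkl
  obtain ⟨m, hm, rfl⟩ : ∃ m < γ, ((m + 1 : ℕ) : ZMod γ) = i :=
    ⟨(i - 1).val, (i - 1).val_lt, by simp⟩
  have hsub : ((m + 1 : ℕ) : ZMod γ) - 1 = m := by push_cast; ring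
  have hm1 : m + 1 ∈ Set.Icc 1 γ := ⟨by omega, hm⟩
  simp only [hsub, natCast_mem_image_natCast_iff hA hm.le,
    natCast_mem_image_natCast_iff hA (m := m + 1) hm]
  by_cases hK : ∃ r, 1 ≤ r ∧ r ≤ ℓ ∧ ((m + 1 : ℕ) : ZMod γ) = k r
  · obtain ⟨r, hr1, hr2, hr⟩ := hK
    have hr' : r ∈ Icc 1 ℓ := mem_Icc.2 ⟨hr1, hr2⟩
    have hmk := ZMod.natCast_injOn_Icc hm1 (H.k_mem_Icc hk1 hkl hr') hr
    rw [hr, hdk r hr1 hr2, if_neg (H.notMem_blocks_of_succ_eq_k hr' hmk),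
      if_pos (hmk ▸ H.k_mem_blocks hr')]
    ring
  by_cases hJ : ∃ r, 1 ≤ r ∧ r ≤ ℓ ∧ ((m + 1 : ℕ) : ZMod γ) = j r
  · obtain ⟨r, hr1, hr2, hr⟩ := hJ
    have hr' : r ∈ Icc 1 ℓ := mem_Icc.2 ⟨hr1, hr2⟩
    have hmj := ZMod.natCast_injOn_Icc hm1 (H.j_mem_Icc hkl hr') hr
    rw [hr, hdj r hr1 hr2, if_pos (H.mem_blocks_of_succ_eq_j hr' hmj),
      if_neg (hmj ▸ H.j_notMem_blocks hr')]
    ring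
  rw [hdo _ hK hJ]
  by_cases h0 : m ∈ blocks ℓ k j <;> by_cases h1 : m + 1 ∈ blocks ℓ k j
  · simp [h0, h1]
  · obtain ⟨r, hr, hjr⟩ := exists_j_eq_of_mem_blocks h0 h1
    exact absurd ⟨r, (mem_Icc.1 hr).1, (mem_Icc.1 hr).2, by rw [hjr]⟩ hJ
  · obtain ⟨r, hr, hkr⟩ := exists_k_eq_of_succ_mem_blocks h1 h0
    exact absurd ⟨r, (mem_Icc.1 hr).1, (mem_Icc.1 hr).2, by rw [hkr]⟩ hK
  · simp [h0, h1]

end Interlaced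

end Bridge

theorem circular_count_components_general (γ : ℕ) [NeZero γ]
    (g : ZMod γ → ℕ) (hg : ∀ i, 1 ≤ g i)
    (ℓ : ℕ) (k j : ℕ → ℕ)
    (hk1 : k 1 = 1)
    (hkj : ∀ r, 1 ≤ r → r ≤ ℓ → k r < j r)
    (hjk : ∀ r, 1 ≤ r → r < ℓ → j r < k (r + 1))
    (hjγ : j ℓ ≤ γ)
    (hklast : k (ℓ + 1) = γ + 1)
    (d : ZMod γ → ℤ)
    (hdk : ∀ r, 1 ≤ r → r ≤ ℓ → d ((k r : ZMod γ)) = (g ((k r : ZMod γ)) : ℤ) - 1)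
    (hdj : ∀ r, 1 ≤ r → r ≤ ℓ → d ((j r : ZMod γ)) = (g ((j r : ZMod γ)) : ℤ) + 1)
    (hdo : ∀ i : ZMod γ, (¬ ∃ r, 1 ≤ r ∧ r ≤ ℓ ∧ i = (k r : ZMod γ)) →
      (¬ ∃ r, 1 ≤ r ∧ r ≤ ℓ ∧ i = (j r : ZMod γ)) → d i = (g i : ℤ)) :
    (∀ i, 0 ≤ d i) ∧
      {Z : Finset (ZMod γ) | Admissible g d Z}.ncard =
        1 + ∑ r ∈ Finset.Icc 1 ℓ, ∑ s ∈ Finset.Icc 1 ℓ,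
          (j r - k r) * (k (s + 1) - j s) := by
  have H : Interlaced ℓ k j := fun r hr => by
    rw [mem_Icc] at hr
    refine ⟨hkj r hr.1 hr.2, ?_⟩
    rcases hr.2.lt_or_eq with h | rfl
    · exact hjk r hr.1 h
    · omega
  have hd := H.eq_add_ite_sub_ite hk1 hklast hdk hdj hdo
  refine ⟨fun i => ?_, ?_⟩
  · rw [hd]
    have := hg i
    split_ifs <;> omega
  rw [ncard_setOf_admissible hd hg, card_compl, ZMod.card, H.card_image_blocks hk1 hklast,
    ← sum_mul_sum]
  have := H.sum_sub_add_sum_sub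
  rw [hk1, hklast] at this
  congr 2
  omega

/-- Proposition 4.3: for a strictly semistable multidegree `d` given by the alternating data
`1 = k₁ < j₁ < k₂ < ⋯ < k_ℓ < j_ℓ ≤ γ` (with `k_{ℓ+1} = γ + 1`) on a circular curve all of
whose components have positive genus, `d` is effective and the number of admissible subsets
(equivalently, of irreducible components of `W_d(C)`) is
`1 + Σ_{r,s} (j_r − k_r)(k_{s+1} − j_s)`. -/
theorem circular_count_components (γ : ℕ) [NeZero γ] (hγ : 3 ≤ γ)
    (g : ZMod γ → ℕ) (hg : ∀ i, 1 ≤ g i)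
    (ℓ : ℕ) (hℓ : 1 ≤ ℓ) (k j : ℕ → ℕ)
    (hk1 : k 1 = 1)
    (hkj : ∀ r, 1 ≤ r → r ≤ ℓ → k r < j r)
    (hjk : ∀ r, 1 ≤ r → r < ℓ → j r < k (r + 1))
    (hjγ : j ℓ ≤ γ)
    (hklast : k (ℓ + 1) = γ + 1)
    (d : ZMod γ → ℤ)
    (hdk : ∀ r, 1 ≤ r → r ≤ ℓ → d ((k r : ZMod γ)) = (g ((k r : ZMod γ)) : ℤ) - 1)
    (hdj : ∀ r, 1 ≤ r → r ≤ ℓ → d ((j r : ZMod γ)) = (g ((j r : ZMod γ)) : ℤ) + 1)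
    (hdo : ∀ i : ZMod γ, (¬ ∃ r, 1 ≤ r ∧ r ≤ ℓ ∧ i = (k r : ZMod γ)) →
      (¬ ∃ r, 1 ≤ r ∧ r ≤ ℓ ∧ i = (j r : ZMod γ)) → d i = (g i : ℤ)) :
    (∀ i, 0 ≤ d i) ∧
      {Z : Finset (ZMod γ) | Admissible g d Z}.ncard =
        1 + ∑ r ∈ Finset.Icc 1 ℓ, ∑ s ∈ Finset.Icc 1 ℓ,
          (j r - k r) * (k (s + 1) - j s) :=
  circular_count_components_general γ g hg ℓ k j hk1 hkj hjk hjγ hklast d hdk hdj hdo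
end

section
/- Assume g_i ≥ 1 for all i ∈ ℤ/γℤ. Let ℓ ≥ 1 and let integers satisfy 1 = k_1 < j_1 < k_2 < j_2 < ⋯ < k_ℓ < j_ℓ ≤ γ. Define the multidegree d on C by d_i = g_i − 1 if i ≡ k_r (mod γ) for some r, d_i = g_i + 1 if i ≡ j_r (mod γ) for some r, and d_i = g_i otherwise. Then the number of admissible subsets Z ⊆ ℤ/γℤ is at least 1 + ℓ². (The final assertion of Proposition 4.3 of the paper.) -/
open Finset

structure CSetup (γ : ℕ) : Type where
  hγ : 3 ≤ γ
  g : ZMod γ → ℕ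
  hg : ∀ i, 1 ≤ g i
  ℓ : ℕ
  hℓ : 1 ≤ ℓ
  k : ℕ → ℕ
  j : ℕ → ℕ
  hk1 : k 1 = 1
  hkj : ∀ r, 1 ≤ r → r ≤ ℓ → k r < j r
  hjk : ∀ r, 1 ≤ r → r < ℓ → j r < k (r + 1)
  hjγ : j ℓ ≤ γ
  d : ZMod γ → ℤ
  hdk : ∀ r, 1 ≤ r → r ≤ ℓ → d ((k r : ZMod γ)) = (g ((k r : ZMod γ)) : ℤ) - 1
  hdj : ∀ r, 1 ≤ r → r ≤ ℓ → d ((j r : ZMod γ)) = (g ((j r : ZMod γ)) : ℤ) + 1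
  hdo : ∀ i : ZMod γ, (¬ ∃ r, 1 ≤ r ∧ r ≤ ℓ ∧ i = (k r : ZMod γ)) →
      (¬ ∃ r, 1 ≤ r ∧ r ≤ ℓ ∧ i = (j r : ZMod γ)) → d i = (g i : ℤ)

namespace CSetup

variable {γ : ℕ} (S : CSetup γ)

/-- unrolled `k` on `[1, 2ℓ]`. -/
def K (t : ℕ) : ℕ := if t ≤ S.ℓ then S.k t else S.k (t - S.ℓ) + γ

/-- unrolled `j` on `[1, 2ℓ]`. -/
def J (t : ℕ) : ℕ := if t ≤ S.ℓ then S.j t else S.j (t - S.ℓ) + γ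

lemma hKJ : ∀ t, 1 ≤ t → t ≤ 2 * S.ℓ → S.K t < S.J t := by
  intro t h1 h2
  unfold K J
  by_cases h : t ≤ S.ℓ
  · simp only [if_pos h]; exact S.hkj t h1 h
  · simp only [if_neg h]
    have : 1 ≤ t - S.ℓ := by omega
    have : t - S.ℓ ≤ S.ℓ := by omega
    have := S.hkj (t - S.ℓ) (by omega) (by omega)
    omega

lemma hJK : ∀ t, 1 ≤ t → t < 2 * S.ℓ → S.J t < S.K (t + 1) := by
  intro t h1 h2
  unfold K J
  rcases lt_trichotomy t S.ℓ with h | h | h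
  · simp only [if_pos (le_of_lt h), if_pos (by omega : t + 1 ≤ S.ℓ)]
    exact S.hjk t h1 h
  · rw [if_pos (le_of_eq h), if_neg (by omega : ¬ t + 1 ≤ S.ℓ)]
    have e2 : t + 1 - S.ℓ = 1 := by omega
    rw [e2, S.hk1]
    have h4 := S.hjγ
    have h5 : S.j t ≤ S.j S.ℓ := by rw [h]
    omega
  · simp only [if_neg (by omega : ¬ t ≤ S.ℓ), if_neg (by omega : ¬ t + 1 ≤ S.ℓ)]
    have e : t + 1 - S.ℓ = (t - S.ℓ) + 1 := by omega
    rw [e]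
    have h3 := S.hjk (t - S.ℓ) (by omega) (by omega)
    omega

lemma Jle : ∀ a b, 1 ≤ a → a ≤ b → b ≤ 2 * S.ℓ → S.J a ≤ S.J b := by
  intro a b h1 hab hb
  induction b, hab using Nat.le_induction with
  | base => exact le_rfl
  | succ b hab ih =>
    have h1b : S.J a ≤ S.J b := ih (by omega)
    have h2 := S.hJK b (by omega) (by omega)
    have h3 := S.hKJ (b + 1) (by omega) hb
    omega

lemma Kle : ∀ a b, 1 ≤ a → a ≤ b → b ≤ 2 * S.ℓ → S.K a ≤ S.K b := by
  intro a b h1 hab hb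
  induction b, hab using Nat.le_induction with
  | base => exact le_rfl
  | succ b hab ih =>
    have h1b : S.K a ≤ S.K b := ih (by omega)
    have h2 := S.hKJ b (by omega) (by omega)
    have h3 := S.hJK b (by omega) (by omega)
    omega

lemma JK : ∀ a b, 1 ≤ a → a < b → b ≤ 2 * S.ℓ → S.J a < S.K b := by
  intro a b h1 hab hb
  have h2 := S.hJK a h1 (by omega)
  have h3 := S.Kle (a + 1) b (by omega) (by omega) hb
  omega

lemma KJ : ∀ a b, 1 ≤ a → a ≤ b → b ≤ 2 * S.ℓ → S.K a < S.J b := by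
  intro a b h1 hab hb
  have h2 := S.hKJ a h1 (by omega)
  have h3 := S.Jle a b h1 hab hb
  omega

lemma Jlt : ∀ a b, 1 ≤ a → a < b → b ≤ 2 * S.ℓ → S.J a < S.J b := by
  intro a b h1 hab hb
  have := S.JK a b h1 hab hb
  have := S.hKJ b (by omega) hb
  omega

lemma Klt : ∀ a b, 1 ≤ a → a < b → b ≤ 2 * S.ℓ → S.K a < S.K b := by
  intro a b h1 hab hb
  have := S.hKJ a h1 (by omega)
  have := S.JK a b h1 hab hb
  omega

lemma Kpos : ∀ t, 1 ≤ t → t ≤ 2 * S.ℓ → 1 ≤ S.K t := by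
  intro t h1 h2
  have hK1 : S.K 1 = 1 := by
    unfold K; rw [if_pos S.hℓ, S.hk1]
  have := S.Kle 1 t le_rfl h1 h2
  omega

lemma J2 : ∀ t, 1 ≤ t → t ≤ 2 * S.ℓ → 2 ≤ S.J t := by
  intro t h1 h2
  have := S.hKJ t h1 h2
  have := S.Kpos t h1 h2
  omega

lemma Jγ : ∀ t, 1 ≤ t → t ≤ S.ℓ → S.J t ≤ γ := by
  intro t h1 h2
  have h3 := S.Jle t S.ℓ h1 h2 (by omega)
  have h4 : S.J S.ℓ = S.j S.ℓ := by unfold J; rw [if_pos le_rfl]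
  have := S.hjγ
  omega

lemma Jshift : ∀ t, 1 ≤ t → t ≤ S.ℓ → S.J (t + S.ℓ) = S.J t + γ := by
  intro t h1 h2
  unfold J
  rw [if_neg (by omega), if_pos h2]
  congr 2
  omega

/-- window bound: for `r ≤ s' ≤ r + ℓ - 1`, `J s' + 2 ≤ J r + γ`. -/
lemma gap : ∀ r s', 1 ≤ r → r ≤ S.ℓ → r ≤ s' → s' ≤ r + S.ℓ - 1 →
    S.J s' + 2 ≤ S.J r + γ := by
  intro r s' h1 h2 h3 h4
  have l1 := S.hJK s' (by omega) (by omega)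
  have l2 := S.hKJ (s' + 1) (by omega) (by omega)
  have l3 := S.Jle (s' + 1) (r + S.ℓ) (by omega) (by omega) (by omega)
  have l4 : S.J (r + S.ℓ) = S.J r + γ := S.Jshift r h1 h2
  omega

end CSetup

lemma castInj (hγ3 : 3 ≤ γ) {x y : ℕ} (hxy : x ≤ y) (hw : y - x < γ)
    (h : (x : ZMod γ) = (y : ZMod γ)) : x = y := by
  rw [ZMod.natCast_eq_natCast_iff] at h
  have h2 := (Nat.modEq_iff_dvd' hxy).mp h
  have h3 := Nat.eq_zero_of_dvd_of_lt h2 hw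
  omega

namespace CSetup

variable {γ : ℕ} (S : CSetup γ)

lemma Kshift : ∀ t, 1 ≤ t → t ≤ S.ℓ → S.K (t + S.ℓ) = S.K t + γ := by
  intro t h1 h2
  unfold K
  rw [if_neg (by omega), if_pos h2]
  congr 2
  omega

lemma castKorig : ∀ u, 1 ≤ u → u ≤ 2 * S.ℓ →
    ∃ t, 1 ≤ t ∧ t ≤ S.ℓ ∧ ((S.K u : ℕ) : ZMod γ) = ((S.k t : ℕ) : ZMod γ) := by
  intro u h1 h2
  by_cases h : u ≤ S.ℓ
  · exact ⟨u, h1, h, by unfold K; rw [if_pos h]⟩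
  · refine ⟨u - S.ℓ, by omega, by omega, ?_⟩
    unfold K
    rw [if_neg h]
    push_cast [ZMod.natCast_self]
    ring

lemma castJorig : ∀ u, 1 ≤ u → u ≤ 2 * S.ℓ →
    ∃ t, 1 ≤ t ∧ t ≤ S.ℓ ∧ ((S.J u : ℕ) : ZMod γ) = ((S.j t : ℕ) : ZMod γ) := by
  intro u h1 h2
  by_cases h : u ≤ S.ℓ
  · exact ⟨u, h1, h, by unfold J; rw [if_pos h]⟩
  · refine ⟨u - S.ℓ, by omega, by omega, ?_⟩
    unfold J
    rw [if_neg h]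
    push_cast [ZMod.natCast_self]
    ring

lemma KneJ : ∀ u u', 1 ≤ u → u ≤ 2 * S.ℓ → 1 ≤ u' → u' ≤ 2 * S.ℓ → S.K u ≠ S.J u' := by
  intro u u' h1 h2 h3 h4
  rcases le_or_gt u u' with h | h
  · have := S.KJ u u' h1 h h4
    omega
  · have := S.JK u' u h3 h h2
    omega

/-- Bundle of constraints on the arc parameters. -/
def Good (r s' : ℕ) : Prop := 1 ≤ r ∧ r ≤ S.ℓ ∧ r ≤ s' ∧ s' ≤ r + S.ℓ - 1

/-- The arc of positions from `J r` to `J s'`, as a subset of `ZMod γ`. -/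
def arcZ (r s' : ℕ) : Finset (ZMod γ) := (Finset.Icc (S.J r) (S.J s')).image (Nat.cast)

lemma good_facts {r s' : ℕ} (h : S.Good r s') :
    1 ≤ r ∧ r ≤ S.ℓ ∧ r ≤ s' ∧ s' ≤ 2 * S.ℓ ∧ 2 ≤ S.J r ∧ S.J r ≤ γ ∧
      S.J s' + 2 ≤ S.J r + γ := by
  obtain ⟨h1, h2, h3, h4⟩ := h
  have hl := S.hℓ
  refine ⟨h1, h2, h3, by omega, S.J2 r h1 (by omega), S.Jγ r h1 h2, ?_⟩
  exact S.gap r s' h1 h2 h3 h4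

lemma mem_arcZ {r s' : ℕ} {i : ZMod γ} :
    i ∈ S.arcZ r s' ↔ ∃ p, S.J r ≤ p ∧ p ≤ S.J s' ∧ (p : ZMod γ) = i := by
  simp [arcZ, Finset.mem_image, Finset.mem_Icc, and_assoc]

lemma arc_cast_inj {r s' : ℕ} (h : S.Good r s') {p q : ℕ}
    (hp1 : S.J r ≤ p) (hp2 : p ≤ S.J s') (hq1 : S.J r ≤ q) (hq2 : q ≤ S.J s')
    (hc : (p : ZMod γ) = (q : ZMod γ)) : p = q := by
  obtain ⟨h1, h2, h3, h4, h5, h6, h7⟩ := S.good_facts h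
  rcases le_total p q with hle | hle
  · exact castInj S.hγ hle (by omega) hc
  · exact (castInj S.hγ hle (by omega) hc.symm).symm

lemma notin_left {r s' : ℕ} (h : S.Good r s') :
    ((S.J r - 1 : ℕ) : ZMod γ) ∉ S.arcZ r s' := by
  obtain ⟨h1, h2, h3, h4, h5, h6, h7⟩ := S.good_facts h
  rw [S.mem_arcZ]
  rintro ⟨p, hp1, hp2, hc⟩
  have := castInj S.hγ (by omega : S.J r - 1 ≤ p) (by omega) hc.symm
  omega

lemma notin_right {r s' : ℕ} (h : S.Good r s') :
    ((S.J s' + 1 : ℕ) : ZMod γ) ∉ S.arcZ r s' := by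
  obtain ⟨h1, h2, h3, h4, h5, h6, h7⟩ := S.good_facts h
  rw [S.mem_arcZ]
  rintro ⟨p, hp1, hp2, hc⟩
  have := castInj S.hγ (by omega : p ≤ S.J s' + 1) (by omega) hc
  omega

lemma Kmem {r s' : ℕ} (h : S.Good r s') {u : ℕ} (hu1 : 1 ≤ u) (hu2 : u ≤ 2 * S.ℓ) :
    (S.J r ≤ S.K u ∧ S.K u ≤ S.J s') ↔ (r + 1 ≤ u ∧ u ≤ s') := by
  obtain ⟨h1, h2, h3, h4, h5, h6, h7⟩ := S.good_facts h
  constructor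
  · rintro ⟨ha, hb⟩
    constructor
    · by_contra hc
      have := S.KJ u r hu1 (by omega) (by omega)
      omega
    · by_contra hc
      have := S.JK s' u (by omega) (by omega) hu2
      omega
  · rintro ⟨ha, hb⟩
    have := S.JK r u h1 (by omega) hu2
    have := S.KJ u s' hu1 hb h4
    omega

lemma Jmem {r s' : ℕ} (h : S.Good r s') {u : ℕ} (hu1 : 1 ≤ u) (hu2 : u ≤ 2 * S.ℓ) :
    (S.J r ≤ S.J u ∧ S.J u ≤ S.J s') ↔ (r ≤ u ∧ u ≤ s') := by
  obtain ⟨h1, h2, h3, h4, h5, h6, h7⟩ := S.good_facts h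
  constructor
  · rintro ⟨ha, hb⟩
    constructor
    · by_contra hc
      have := S.Jlt u r hu1 (by omega) (by omega)
      omega
    · by_contra hc
      have := S.Jlt s' u (by omega) (by omega) hu2
      omega
  · rintro ⟨ha, hb⟩
    exact ⟨S.Jle r u h1 ha hu2, S.Jle u s' hu1 hb h4⟩

lemma markK {r s' : ℕ} (h : S.Good r s') {p : ℕ}
    (hp1 : S.J r ≤ p) (hp2 : p ≤ S.J s') :
    (∃ t, 1 ≤ t ∧ t ≤ S.ℓ ∧ (p : ZMod γ) = ((S.k t : ℕ) : ZMod γ)) ↔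
      p ∈ (Finset.Icc (r+1) s').image S.K := by
  obtain ⟨h1, h2, h3, h4, h5, h6, h7⟩ := S.good_facts h
  simp only [Finset.mem_image, Finset.mem_Icc]
  constructor
  · rintro ⟨t, ht1, ht2, hc⟩
    have hKt : S.K t = S.k t := by unfold K; rw [if_pos ht2]
    have hKb : S.K t < S.J t := S.hKJ t ht1 (by omega)
    have hJt : S.J t ≤ γ := S.Jγ t ht1 ht2
    rw [← hKt] at hc
    rcases le_total p (S.K t) with hle | hle
    · have hpK := castInj S.hγ hle (by omega) hc
      refine ⟨t, ?_, hpK.symm⟩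
      rw [← (S.Kmem h ht1 (by omega))]
      omega
    · -- p ≥ K t : p = K t or p = K t + γ
      rw [ZMod.natCast_eq_natCast_iff] at hc
      have hdvd := (Nat.modEq_iff_dvd' hle).mp hc.symm
      have hcase : p - S.K t = 0 ∨ p - S.K t = γ := by
        rcases Nat.lt_or_ge (p - S.K t) γ with hlt | hge
        · left; rcases Nat.eq_zero_or_pos (p - S.K t) with h0 | h0
          · exact h0
          · exact absurd (Nat.le_of_dvd h0 hdvd) (by omega)
        · right
          have h2γ : p - S.K t < 2 * γ := by omega
          rcases hdvd with ⟨c, hcc⟩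
          have hlt : γ * c < γ * 2 := by omega
          have hcl : c < 2 := Nat.lt_of_mul_lt_mul_left hlt
          have hc0 : c ≠ 0 := by rintro rfl; simp at hcc; omega
          have hc1 : c = 1 := by omega
          rw [hc1, mul_one] at hcc
          omega
      rcases hcase with h0 | h0
      · refine ⟨t, ?_, by omega⟩
        rw [← (S.Kmem h ht1 (by omega))]
        omega
      · have hsh := S.Kshift t ht1 ht2
        refine ⟨t + S.ℓ, ?_, by omega⟩
        rw [← (S.Kmem h (by omega) (by omega))]
        omega
  · rintro ⟨u, hu, hKu⟩
    have hu1 : 1 ≤ u := by omega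
    have hu2 : u ≤ 2 * S.ℓ := by omega
    obtain ⟨t, ht1, ht2, hc⟩ := S.castKorig u hu1 hu2
    exact ⟨t, ht1, ht2, by rw [← hKu, hc]⟩

lemma markJ {r s' : ℕ} (h : S.Good r s') {p : ℕ}
    (hp1 : S.J r ≤ p) (hp2 : p ≤ S.J s') :
    (∃ t, 1 ≤ t ∧ t ≤ S.ℓ ∧ (p : ZMod γ) = ((S.j t : ℕ) : ZMod γ)) ↔
      p ∈ (Finset.Icc r s').image S.J := by
  obtain ⟨h1, h2, h3, h4, h5, h6, h7⟩ := S.good_facts h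
  simp only [Finset.mem_image, Finset.mem_Icc]
  constructor
  · rintro ⟨t, ht1, ht2, hc⟩
    have hJte : S.J t = S.j t := by unfold J; rw [if_pos ht2]
    have hJt : S.J t ≤ γ := S.Jγ t ht1 ht2
    have hJt2 : 2 ≤ S.J t := S.J2 t ht1 (by omega)
    rw [← hJte] at hc
    rcases le_total p (S.J t) with hle | hle
    · have hpK := castInj S.hγ hle (by omega) hc
      refine ⟨t, ?_, hpK.symm⟩
      rw [← (S.Jmem h ht1 (by omega))]
      omega
    · rw [ZMod.natCast_eq_natCast_iff] at hc
      have hdvd := (Nat.modEq_iff_dvd' hle).mp hc.symm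
      have hcase : p - S.J t = 0 ∨ p - S.J t = γ := by
        rcases Nat.lt_or_ge (p - S.J t) γ with hlt | hge
        · left; rcases Nat.eq_zero_or_pos (p - S.J t) with h0 | h0
          · exact h0
          · exact absurd (Nat.le_of_dvd h0 hdvd) (by omega)
        · right
          have h2γ : p - S.J t < 2 * γ := by omega
          rcases hdvd with ⟨c, hcc⟩
          have hlt : γ * c < γ * 2 := by omega
          have hcl : c < 2 := Nat.lt_of_mul_lt_mul_left hlt
          have hc0 : c ≠ 0 := by rintro rfl; simp at hcc; omega
          have hc1 : c = 1 := by omega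
          rw [hc1, mul_one] at hcc
          omega
      rcases hcase with h0 | h0
      · refine ⟨t, ?_, by omega⟩
        rw [← (S.Jmem h ht1 (by omega))]
        omega
      · have hsh := S.Jshift t ht1 ht2
        refine ⟨t + S.ℓ, ?_, by omega⟩
        rw [← (S.Jmem h (by omega) (by omega))]
        omega
  · rintro ⟨u, hu, hJu⟩
    have hu1 : 1 ≤ u := by omega
    have hu2 : u ≤ 2 * S.ℓ := by omega
    obtain ⟨t, ht1, ht2, hc⟩ := S.castJorig u hu1 hu2
    exact ⟨t, ht1, ht2, by rw [← hJu, hc]⟩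

end CSetup

lemma cast_pred {γ : ℕ} {p : ℕ} (hp : 1 ≤ p) :
    ((p : ZMod γ)) - 1 = ((p - 1 : ℕ) : ZMod γ) := by
  obtain ⟨q, rfl⟩ : ∃ q, p = q + 1 := ⟨p - 1, by omega⟩
  push_cast [Nat.add_sub_cancel]
  ring

lemma cast_succ {γ : ℕ} (p : ℕ) :
    ((p : ZMod γ)) + 1 = ((p + 1 : ℕ) : ZMod γ) := by
  push_cast
  ring

namespace CSetup

variable {γ : ℕ} (S : CSetup γ)

lemma dval {r s' : ℕ} (h : S.Good r s') {p : ℕ}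
    (hp1 : S.J r ≤ p) (hp2 : p ≤ S.J s') :
    S.d ((p : ZMod γ)) = (S.g ((p : ZMod γ)) : ℤ)
      + (if p ∈ (Finset.Icc r s').image S.J then 1 else 0)
      - (if p ∈ (Finset.Icc (r+1) s').image S.K then 1 else 0) := by
  obtain ⟨h1, h2, h3, h4, h5, h6, h7⟩ := S.good_facts h
  by_cases hK : p ∈ (Finset.Icc (r+1) s').image S.K
  · have hJ : p ∉ (Finset.Icc r s').image S.J := by
      simp only [Finset.mem_image, Finset.mem_Icc] at hK ⊢
      obtain ⟨u, hu, hKu⟩ := hK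
      rintro ⟨u', hu', hJu'⟩
      exact S.KneJ u u' (by omega) (by omega) (by omega) (by omega) (by rw [hKu, hJu'])
    rw [if_pos hK, if_neg hJ]
    simp only [Finset.mem_image, Finset.mem_Icc] at hK
    obtain ⟨u, hu, hKu⟩ := hK
    obtain ⟨t, ht1, ht2, hc⟩ := S.castKorig u (by omega) (by omega)
    have hpc : ((p : ℕ) : ZMod γ) = ((S.k t : ℕ) : ZMod γ) := by rw [← hKu, hc]
    rw [hpc, S.hdk t ht1 ht2]
    ring
  · by_cases hJ : p ∈ (Finset.Icc r s').image S.J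
    · rw [if_pos hJ, if_neg hK]
      simp only [Finset.mem_image, Finset.mem_Icc] at hJ
      obtain ⟨u, hu, hJu⟩ := hJ
      obtain ⟨t, ht1, ht2, hc⟩ := S.castJorig u (by omega) (by omega)
      have hpc : ((p : ℕ) : ZMod γ) = ((S.j t : ℕ) : ZMod γ) := by rw [← hJu, hc]
      rw [hpc, S.hdj t ht1 ht2]
      ring
    · rw [if_neg hK, if_neg hJ]
      have hK' : ¬ ∃ t, 1 ≤ t ∧ t ≤ S.ℓ ∧ ((p : ℕ) : ZMod γ) = ((S.k t : ℕ) : ZMod γ) := by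
        rw [S.markK h hp1 hp2]; exact hK
      have hJ' : ¬ ∃ t, 1 ≤ t ∧ t ≤ S.ℓ ∧ ((p : ℕ) : ZMod γ) = ((S.j t : ℕ) : ZMod γ) := by
        rw [S.markJ h hp1 hp2]; exact hJ
      rw [S.hdo _ hK' hJ']
      ring

lemma eval {r s' : ℕ} (h : S.Good r s') {p : ℕ}
    (hp1 : S.J r ≤ p) (hp2 : p ≤ S.J s') :
    eMult S.d (S.arcZ r s') ((p : ZMod γ)) = S.d ((p : ZMod γ))
      - (if p = S.J r then 1 else 0) - (if p = S.J s' then 1 else 0) := by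
  obtain ⟨h1, h2, h3, h4, h5, h6, h7⟩ := S.good_facts h
  unfold eMult
  have hpred : ((p : ZMod γ)) - 1 = ((p - 1 : ℕ) : ZMod γ) := cast_pred (by omega)
  have hsucc : ((p : ZMod γ)) + 1 = ((p + 1 : ℕ) : ZMod γ) := cast_succ p
  have hL : (if ((p : ZMod γ) - 1) ∈ S.arcZ r s' then (0:ℤ) else 1)
      = (if p = S.J r then 1 else 0) := by
    rw [hpred]
    by_cases hpr : p = S.J r
    · rw [if_pos hpr, if_neg (by rw [hpr]; exact S.notin_left h)]
    · rw [if_neg hpr, if_pos (by rw [S.mem_arcZ]; exact ⟨p - 1, by omega, by omega, rfl⟩)]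
  have hR : (if ((p : ZMod γ) + 1) ∈ S.arcZ r s' then (0:ℤ) else 1)
      = (if p = S.J s' then 1 else 0) := by
    rw [hsucc]
    by_cases hps : p = S.J s'
    · rw [if_pos hps, if_neg (by rw [hps]; exact S.notin_right h)]
    · rw [if_neg hps, if_pos (by rw [S.mem_arcZ]; exact ⟨p + 1, by omega, by omega, rfl⟩)]
  rw [hL, hR]

/-- Core combinatorial lemma: the number of "deficit" marks `K (r+q)` lying in `Y` is at most
the number of witnesses in `W ∩ Y` plus the number of components of `Y`. -/
lemma core {r m : ℕ} (hr : 1 ≤ r) (hm : r + m ≤ 2 * S.ℓ)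
    (hwin : S.K (r + m) < S.J r + γ)
    (Y W : Finset (ZMod γ))
    (hW : ∀ q, 2 ≤ q → q ≤ m → ((S.J (r + q - 1) : ℕ) : ZMod γ) ∈ W)
    (hW1 : ((S.J r : ℕ) : ZMod γ) ∈ W ∨ (((S.J r - 1 : ℕ) : ZMod γ)) ∉ Y) :
    ((Finset.Icc 1 m).filter (fun q => ((S.K (r + q) : ℕ) : ZMod γ) ∈ Y)).card
      ≤ (W ∩ Y).card + nCirc Y := by
  classical
  set T := (Finset.Icc 1 m).filter (fun q => ((S.K (r + q) : ℕ) : ZMod γ) ∈ Y) with hT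
  set lo : ℕ → ℕ := fun q => S.J (r + q - 1) with hlo
  set hi : ℕ → ℕ := fun q => S.K (r + q) with hhi
  set P : ℕ → ℕ → Prop := fun q n => ∀ t, t ≤ n → ((hi q - t : ℕ) : ZMod γ) ∈ Y with hP
  have hPdec : ∀ q, DecidablePred (P q) := fun q n => Nat.decidableBallLE n _
  set N : ℕ → ℕ := fun q => @Nat.findGreatest (P q) (hPdec q) (hi q - lo q) with hN
  set w : ℕ → ℕ := fun q => hi q - N q with hw
  set f : ℕ → ZMod γ := fun q => ((w q : ℕ) : ZMod γ) with hf
  -- facts about q ∈ T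
  have hTmem : ∀ q ∈ T, 1 ≤ q ∧ q ≤ m ∧ ((S.K (r + q) : ℕ) : ZMod γ) ∈ Y := by
    intro q hq
    rw [hT, Finset.mem_filter, Finset.mem_Icc] at hq
    exact ⟨hq.1.1, hq.1.2, hq.2⟩
  have hlohi : ∀ q, 1 ≤ q → q ≤ m → lo q < hi q := by
    intro q h1 h2
    have := S.hJK (r + q - 1) (by omega) (by omega)
    have e : r + q - 1 + 1 = r + q := by omega
    rw [e] at this
    exact this
  have hlo2 : ∀ q, 1 ≤ q → q ≤ m → 2 ≤ lo q := by
    intro q h1 h2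
    exact S.J2 (r + q - 1) (by omega) (by omega)
  have hloJr : ∀ q, 1 ≤ q → q ≤ m → S.J r ≤ lo q := by
    intro q h1 h2
    exact S.Jle r (r + q - 1) hr (by omega) (by omega)
  have hhiK : ∀ q, 1 ≤ q → q ≤ m → hi q ≤ S.K (r + m) := by
    intro q h1 h2
    rcases eq_or_lt_of_le h2 with hh | hh
    · rw [hh]
    · exact le_of_lt (S.Klt (r + q) (r + m) (by omega) (by omega) (by omega))
  have hPN : ∀ q ∈ T, P q (N q) := by
    intro q hq
    obtain ⟨h1, h2, h3⟩ := hTmem q hq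
    refine Nat.findGreatest_spec (Nat.zero_le _) ?_
    intro t ht
    have : t = 0 := by omega
    rw [this, Nat.sub_zero]
    exact h3
  have hNle : ∀ q, N q ≤ hi q - lo q := fun q => Nat.findGreatest_le _
  have hwbounds : ∀ q ∈ T, lo q ≤ w q ∧ w q ≤ hi q := by
    intro q hq
    obtain ⟨h1, h2, _⟩ := hTmem q hq
    have := hNle q
    have := hlohi q h1 h2
    constructor <;> simp only [hw] <;> omega
  have hwY : ∀ q ∈ T, ((w q : ℕ) : ZMod γ) ∈ Y := by
    intro q hq
    exact hPN q hq (N q) le_rfl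
  -- maps into the union
  have hmaps : ∀ q ∈ T, f q ∈ (W ∩ Y) ∪ Y.filter (fun i => i - 1 ∉ Y) := by
    intro q hq
    obtain ⟨h1, h2, h3⟩ := hTmem q hq
    have hwb := hwbounds q hq
    have hwy := hwY q hq
    by_cases hNq : N q = hi q - lo q
    · -- the walk reached `lo q`
      have hwlo : w q = lo q := by
        simp only [hw, hNq]
        have := hlohi q h1 h2
        omega
      rcases eq_or_lt_of_le h1 with hq1 | hq1
      · -- q = 1
        have hloJ : lo q = S.J r := by
          simp only [hlo]
          congr 1
          omega
        rcases hW1 with hWin | hnY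
        · apply Finset.mem_union_left
          rw [Finset.mem_inter]
          refine ⟨?_, hwy⟩
          rw [hf]
          simp only [hwlo, hloJ]
          exact hWin
        · apply Finset.mem_union_right
          rw [Finset.mem_filter]
          refine ⟨hwy, ?_⟩
          rw [hf]
          simp only [hwlo, hloJ]
          rw [cast_pred (by have := hlo2 q h1 h2; simp only [hloJ] at *; omega)]
          exact hnY
      · -- q ≥ 2
        apply Finset.mem_union_left
        rw [Finset.mem_inter]
        refine ⟨?_, hwy⟩
        rw [hf]
        simp only [hwlo, hlo]
        exact hW q (by omega) h2
    · -- the walk stopped strictly before `lo q`: component start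
      have hNlt : N q < hi q - lo q := lt_of_le_of_ne (hNle q) hNq
      have hstart : ((w q - 1 : ℕ) : ZMod γ) ∉ Y := by
        intro hmem
        have hP' : P q (N q + 1) := by
          have hPq := hPN q hq
          simp only [hP] at hPq ⊢
          intro t ht
          rcases Nat.lt_or_ge t (N q + 1) with ht' | ht'
          · exact hPq t (by omega)
          · have : t = N q + 1 := by omega
            rw [this]
            have e : hi q - (N q + 1) = w q - 1 := by simp only [hw]; omega
            rw [e]
            exact hmem
        have hNeq : Nat.findGreatest (P q) (hi q - lo q) = N q := by rw [hN]
        exact Nat.findGreatest_is_greatest (n := hi q - lo q) (k := N q + 1)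
          (by omega) (by omega) hP'
      apply Finset.mem_union_right
      rw [Finset.mem_filter]
      refine ⟨hwy, ?_⟩
      rw [hf, cast_pred (by have := hlo2 q h1 h2; omega)]
      exact hstart
  -- injectivity
  have hmono : ∀ q ∈ T, ∀ q' ∈ T, q < q' → f q ≠ f q' := by
    intro q hq q' hq' hlt heq
    obtain ⟨h1, h2, h3⟩ := hTmem q hq
    obtain ⟨h1', h2', h3'⟩ := hTmem q' hq'
    have hb := hwbounds q hq
    have hb' := hwbounds q' hq'
    have hKJ' : hi q < lo q' := by
      simp only [hhi, hlo]
      exact S.KJ (r + q) (r + q' - 1) (by omega) (by omega) (by omega)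
    have hwin' : w q' - w q < γ := by
      have := hhiK q' h1' h2'
      have := hloJr q h1 h2
      omega
    simp only [hf] at heq
    have hle : w q ≤ w q' := by omega
    have := castInj S.hγ hle hwin' heq
    omega
  have hinj : Set.InjOn f T := by
    intro q hq q' hq' heq
    by_contra hne
    rcases lt_or_gt_of_ne hne with hlt | hlt
    · exact hmono q hq q' hq' hlt heq
    · exact hmono q' hq' q hq hlt heq.symm
  calc T.card ≤ ((W ∩ Y) ∪ Y.filter (fun i => i - 1 ∉ Y)).card :=
        Finset.card_le_card_of_injOn f hmaps hinj
    _ ≤ (W ∩ Y).card + (Y.filter (fun i => i - 1 ∉ Y)).card := Finset.card_union_le _ _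
    _ = (W ∩ Y).card + nCirc Y := rfl

end CSetup

namespace CSetup

variable {γ : ℕ} [NeZero γ] (S : CSetup γ)

lemma arc_icc_inj {r s' : ℕ} (h : S.Good r s') :
    ∀ x ∈ Finset.Icc (S.J r) (S.J s'), ∀ y ∈ Finset.Icc (S.J r) (S.J s'),
      (x : ZMod γ) = (y : ZMod γ) → x = y := by
  intro x hx y hy
  rw [Finset.mem_Icc] at hx hy
  exact S.arc_cast_inj h hx.1 hx.2 hy.1 hy.2

lemma arc_ne_univ {r s' : ℕ} (h : S.Good r s') : S.arcZ r s' ≠ Finset.univ := by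
  intro he
  exact S.notin_left h (he ▸ Finset.mem_univ _)

lemma arc_nonempty {r s' : ℕ} (h : S.Good r s') : (S.arcZ r s').Nonempty := by
  obtain ⟨h1, h2, h3, h4, h5, h6, h7⟩ := S.good_facts h
  refine ⟨((S.J r : ℕ) : ZMod γ), ?_⟩
  rw [S.mem_arcZ]
  exact ⟨S.J r, le_rfl, S.Jle r s' h1 h3 h4, rfl⟩

lemma arc_filter_left {r s' : ℕ} (h : S.Good r s') :
    (S.arcZ r s').filter (fun i => i - 1 ∉ S.arcZ r s') = {((S.J r : ℕ) : ZMod γ)} := by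
  obtain ⟨h1, h2, h3, h4, h5, h6, h7⟩ := S.good_facts h
  ext i
  simp only [Finset.mem_filter, Finset.mem_singleton]
  constructor
  · rintro ⟨hiZ, hpred⟩
    rw [S.mem_arcZ] at hiZ
    obtain ⟨p, hp1, hp2, rfl⟩ := hiZ
    by_cases hpr : p = S.J r
    · rw [hpr]
    · exfalso
      apply hpred
      rw [cast_pred (by omega), S.mem_arcZ]
      exact ⟨p - 1, by omega, by omega, rfl⟩
  · rintro rfl
    constructor
    · rw [S.mem_arcZ]
      exact ⟨S.J r, le_rfl, S.Jle r s' h1 h3 h4, rfl⟩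
    · rw [cast_pred (by omega)]
      exact S.notin_left h

lemma arc_filter_right {r s' : ℕ} (h : S.Good r s') :
    (S.arcZ r s').filter (fun i => i + 1 ∉ S.arcZ r s') = {((S.J s' : ℕ) : ZMod γ)} := by
  obtain ⟨h1, h2, h3, h4, h5, h6, h7⟩ := S.good_facts h
  ext i
  simp only [Finset.mem_filter, Finset.mem_singleton]
  constructor
  · rintro ⟨hiZ, hsucc⟩
    rw [S.mem_arcZ] at hiZ
    obtain ⟨p, hp1, hp2, rfl⟩ := hiZ
    by_cases hps : p = S.J s'
    · rw [hps]
    · exfalso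
      apply hsucc
      rw [cast_succ, S.mem_arcZ]
      exact ⟨p + 1, by omega, by omega, rfl⟩
  · rintro rfl
    constructor
    · rw [S.mem_arcZ]
      exact ⟨S.J s', S.Jle r s' h1 h3 h4, le_rfl, rfl⟩
    · rw [cast_succ]
      exact S.notin_right h

lemma arc_nCirc {r s' : ℕ} (h : S.Good r s') : nCirc (S.arcZ r s') = 1 := by
  unfold nCirc
  rw [S.arc_filter_left h, Finset.card_singleton]

lemma arc_eff {r s' : ℕ} (h : S.Good r s') :
    ∀ i ∈ S.arcZ r s', 0 ≤ eMult S.d (S.arcZ r s') i := by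
  obtain ⟨h1, h2, h3, h4, h5, h6, h7⟩ := S.good_facts h
  intro i hi
  rw [S.mem_arcZ] at hi
  obtain ⟨p, hp1, hp2, rfl⟩ := hi
  rw [S.eval h hp1 hp2, S.dval h hp1 hp2]
  have hg1 : 1 ≤ (S.g ((p : ℕ) : ZMod γ) : ℤ) := by exact_mod_cast S.hg _
  by_cases hK : p ∈ (Finset.Icc (r+1) s').image S.K
  · simp only [Finset.mem_image, Finset.mem_Icc] at hK
    obtain ⟨u, hu, hKu⟩ := hK
    have hA : p ≠ S.J r := by
      intro he
      exact S.KneJ u r (by omega) (by omega) (by omega) (by omega) (by omega)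
    have hB : p ≠ S.J s' := by
      intro he
      exact S.KneJ u s' (by omega) (by omega) (by omega) (by omega) (by omega)
    rw [if_neg hA, if_neg hB]
    split_ifs <;> omega
  · by_cases hJ : p ∈ (Finset.Icc r s').image S.J
    · rw [if_pos hJ, if_neg hK]
      split_ifs <;> omega
    · have hA : p ≠ S.J r := by
        intro he
        apply hJ
        rw [Finset.mem_image]
        exact ⟨r, Finset.mem_Icc.mpr ⟨le_rfl, h3⟩, he.symm⟩
      have hB : p ≠ S.J s' := by
        intro he
        apply hJ
        rw [Finset.mem_image]
        exact ⟨s', Finset.mem_Icc.mpr ⟨h3, le_rfl⟩, he.symm⟩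
      rw [if_neg hK, if_neg hJ, if_neg hA, if_neg hB]
      omega

lemma arc_deg {r s' : ℕ} (h : S.Good r s') :
    ∑ i ∈ S.arcZ r s', eMult S.d (S.arcZ r s') i = gSub S.g (S.arcZ r s') - 1 := by
  obtain ⟨h1, h2, h3, h4, h5, h6, h7⟩ := S.good_facts h
  have hinj := S.arc_icc_inj h
  rw [gSub, if_neg (S.arc_ne_univ h)]
  have e1 : ∑ i ∈ S.arcZ r s', eMult S.d (S.arcZ r s') i
      = ∑ p ∈ Finset.Icc (S.J r) (S.J s'), eMult S.d (S.arcZ r s') ((p : ℕ) : ZMod γ) :=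
    Finset.sum_image hinj
  have e2 : ∑ i ∈ S.arcZ r s', (S.g i : ℤ)
      = ∑ p ∈ Finset.Icc (S.J r) (S.J s'), (S.g ((p : ℕ) : ZMod γ) : ℤ) :=
    Finset.sum_image hinj
  rw [e1, e2]
  have e3 : ∑ p ∈ Finset.Icc (S.J r) (S.J s'), eMult S.d (S.arcZ r s') ((p : ℕ) : ZMod γ)
      = ∑ p ∈ Finset.Icc (S.J r) (S.J s'),
          ((S.g ((p : ℕ) : ZMod γ) : ℤ)
            + (if p ∈ (Finset.Icc r s').image S.J then 1 else 0)
            - (if p ∈ (Finset.Icc (r+1) s').image S.K then 1 else 0)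
            - (if p = S.J r then 1 else 0) - (if p = S.J s' then 1 else 0)) := by
    refine Finset.sum_congr rfl (fun p hp => ?_)
    rw [Finset.mem_Icc] at hp
    rw [S.eval h hp.1 hp.2, S.dval h hp.1 hp.2]
  rw [e3]
  have hsplit : ∑ p ∈ Finset.Icc (S.J r) (S.J s'),
      ((S.g ((p : ℕ) : ZMod γ) : ℤ)
        + (if p ∈ (Finset.Icc r s').image S.J then 1 else 0)
        - (if p ∈ (Finset.Icc (r+1) s').image S.K then 1 else 0)
        - (if p = S.J r then 1 else 0) - (if p = S.J s' then 1 else 0))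
      = (∑ p ∈ Finset.Icc (S.J r) (S.J s'), (S.g ((p : ℕ) : ZMod γ) : ℤ))
        + (∑ p ∈ Finset.Icc (S.J r) (S.J s'),
            (if p ∈ (Finset.Icc r s').image S.J then (1:ℤ) else 0))
        - (∑ p ∈ Finset.Icc (S.J r) (S.J s'),
            (if p ∈ (Finset.Icc (r+1) s').image S.K then (1:ℤ) else 0))
        - (∑ p ∈ Finset.Icc (S.J r) (S.J s'), (if p = S.J r then (1:ℤ) else 0))
        - (∑ p ∈ Finset.Icc (S.J r) (S.J s'), (if p = S.J s' then (1:ℤ) else 0)) := by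
    rw [Finset.sum_sub_distrib, Finset.sum_sub_distrib, Finset.sum_sub_distrib,
      Finset.sum_add_distrib]
  rw [hsplit]
  have hJsub : (Finset.Icc r s').image S.J ⊆ Finset.Icc (S.J r) (S.J s') := by
    intro x hx
    rw [Finset.mem_image] at hx
    obtain ⟨u, hu, rfl⟩ := hx
    rw [Finset.mem_Icc] at hu ⊢
    exact (S.Jmem h (by omega) (by omega)).mpr hu
  have hKsub : (Finset.Icc (r+1) s').image S.K ⊆ Finset.Icc (S.J r) (S.J s') := by
    intro x hx
    rw [Finset.mem_image] at hx
    obtain ⟨u, hu, rfl⟩ := hx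
    rw [Finset.mem_Icc] at hu ⊢
    exact (S.Kmem h (by omega) (by omega)).mpr hu
  have hSJ : ∑ p ∈ Finset.Icc (S.J r) (S.J s'),
      (if p ∈ (Finset.Icc r s').image S.J then (1:ℤ) else 0) = ((s' - r + 1 : ℕ) : ℤ) := by
    rw [Finset.sum_boole, Finset.filter_mem_eq_inter, Finset.inter_eq_right.mpr hJsub]
    congr 1
    rw [Finset.card_image_of_injOn, Nat.card_Icc]
    · omega
    · intro x hx y hy hxy
      rw [Finset.mem_coe, Finset.mem_Icc] at hx hy
      by_contra hne
      rcases lt_or_gt_of_ne hne with hlt | hlt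
      · exact absurd hxy (ne_of_lt (S.Jlt x y (by omega) hlt (by omega)))
      · exact absurd hxy.symm (ne_of_lt (S.Jlt y x (by omega) hlt (by omega)))
  have hSK : ∑ p ∈ Finset.Icc (S.J r) (S.J s'),
      (if p ∈ (Finset.Icc (r+1) s').image S.K then (1:ℤ) else 0) = ((s' - r : ℕ) : ℤ) := by
    rw [Finset.sum_boole, Finset.filter_mem_eq_inter, Finset.inter_eq_right.mpr hKsub]
    congr 1
    rw [Finset.card_image_of_injOn, Nat.card_Icc]
    · omega
    · intro x hx y hy hxy
      rw [Finset.mem_coe, Finset.mem_Icc] at hx hy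
      by_contra hne
      rcases lt_or_gt_of_ne hne with hlt | hlt
      · exact absurd hxy (ne_of_lt (S.Klt x y (by omega) hlt (by omega)))
      · exact absurd hxy.symm (ne_of_lt (S.Klt y x (by omega) hlt (by omega)))
  have hSR : ∑ p ∈ Finset.Icc (S.J r) (S.J s'), (if p = S.J r then (1:ℤ) else 0) = 1 := by
    rw [Finset.sum_ite_eq' (Finset.Icc (S.J r) (S.J s')) (S.J r) (fun _ => (1:ℤ)),
      if_pos (Finset.mem_Icc.mpr ⟨le_rfl, S.Jle r s' h1 h3 h4⟩)]
  have hSS : ∑ p ∈ Finset.Icc (S.J r) (S.J s'), (if p = S.J s' then (1:ℤ) else 0) = 1 := by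
    rw [Finset.sum_ite_eq' (Finset.Icc (S.J r) (S.J s')) (S.J s') (fun _ => (1:ℤ)),
      if_pos (Finset.mem_Icc.mpr ⟨S.Jle r s' h1 h3 h4, le_rfl⟩)]
  rw [hSJ, hSK, hSR, hSS]
  omega

end CSetup

namespace CSetup

variable {γ : ℕ} [NeZero γ] (S : CSetup γ)

lemma arc_semi {r s' : ℕ} (h : S.Good r s') (Y : Finset (ZMod γ))
    (hYZ : Y ⊆ S.arcZ r s') (hYne : Y.Nonempty) (hYneZ : Y ≠ S.arcZ r s') :
    (∑ i ∈ Y, eMult S.d (S.arcZ r s') i) ≥ (∑ i ∈ Y, (S.g i : ℤ)) - nCirc Y := by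
  obtain ⟨h1, h2, h3, h4, h5, h6, h7⟩ := S.good_facts h
  rcases eq_or_lt_of_le h3 with hrr | hrs'
  · -- degenerate case : `Z` is a single vertex, so `Y = Z`, contradiction
    exfalso
    have hZsing : S.arcZ r s' = {((S.J r : ℕ) : ZMod γ)} := by
      unfold arcZ
      rw [← hrr, Finset.Icc_self, Finset.image_singleton]
    rw [hZsing] at hYZ hYneZ
    rcases Finset.subset_singleton_iff.mp hYZ with he | he
    · exact hYne.ne_empty he
    · exact hYneZ he
  -- main case r < s'
  set W : Finset (ZMod γ) := (Finset.Ioo r s').image (fun u => ((S.J u : ℕ) : ZMod γ)) with hW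
  set KC : Finset (ZMod γ) :=
    (Finset.Icc (r+1) s').image (fun u => ((S.K u : ℕ) : ZMod γ)) with hKC
  -- pointwise identity on Y
  have hpoint : ∀ i ∈ Y, eMult S.d (S.arcZ r s') i - (S.g i : ℤ)
      = (if i ∈ W then 1 else 0) - (if i ∈ KC then 1 else 0) := by
    intro i hi
    have hiZ := hYZ hi
    rw [S.mem_arcZ] at hiZ
    obtain ⟨p, hp1, hp2, rfl⟩ := hiZ
    rw [S.eval h hp1 hp2, S.dval h hp1 hp2]
    by_cases hK : p ∈ (Finset.Icc (r+1) s').image S.K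
    · -- p is a k-mark
      simp only [Finset.mem_image, Finset.mem_Icc] at hK
      obtain ⟨u, hu, hKu⟩ := hK
      have hA : p ≠ S.J r := fun he =>
        S.KneJ u r (by omega) (by omega) (by omega) (by omega) (by omega)
      have hB : p ≠ S.J s' := fun he =>
        S.KneJ u s' (by omega) (by omega) (by omega) (by omega) (by omega)
      have hJ : p ∉ (Finset.Icc r s').image S.J := by
        rw [Finset.mem_image]
        rintro ⟨u', hu', hJu'⟩
        rw [Finset.mem_Icc] at hu'
        exact S.KneJ u u' (by omega) (by omega) (by omega) (by omega) (by omega)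
      have hWm : ((p : ℕ) : ZMod γ) ∉ W := by
        rw [hW, Finset.mem_image]
        rintro ⟨u', hu', hc⟩
        rw [Finset.mem_Ioo] at hu'
        have hJA := (S.Jmem h (u := u') (by omega) (by omega)).mpr ⟨by omega, by omega⟩
        have := S.arc_cast_inj h hJA.1 hJA.2 hp1 hp2 hc
        exact S.KneJ u u' (by omega) (by omega) (by omega) (by omega) (by omega)
      have hKm : ((p : ℕ) : ZMod γ) ∈ KC := by
        rw [hKC, Finset.mem_image]
        exact ⟨u, Finset.mem_Icc.mpr hu, by rw [hKu]⟩
      rw [if_pos hKm, if_neg hWm, if_neg hJ, if_neg hA, if_neg hB, if_pos]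
      · ring
      · rw [Finset.mem_image]
        exact ⟨u, Finset.mem_Icc.mpr hu, hKu⟩
    · have hKm : ((p : ℕ) : ZMod γ) ∉ KC := by
        rw [hKC, Finset.mem_image]
        rintro ⟨u', hu', hc⟩
        rw [Finset.mem_Icc] at hu'
        have hKA := (S.Kmem h (u := u') (by omega) (by omega)).mpr ⟨by omega, by omega⟩
        have heq := S.arc_cast_inj h hKA.1 hKA.2 hp1 hp2 hc
        apply hK
        rw [Finset.mem_image]
        exact ⟨u', Finset.mem_Icc.mpr hu', heq⟩
      by_cases hJ : p ∈ (Finset.Icc r s').image S.J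
      · obtain ⟨u, hu, hJu⟩ := Finset.mem_image.mp hJ
        rw [Finset.mem_Icc] at hu
        have hJinj : ∀ u' , 1 ≤ u' → u' ≤ 2 * S.ℓ → S.J u' = p → u' = u := by
          intro u' hu1 hu2 hJu'
          by_contra hne
          rcases lt_or_gt_of_ne hne with hlt | hlt
          · have := S.Jlt u' u hu1 hlt (by omega)
            omega
          · have := S.Jlt u u' (by omega) hlt hu2
            omega
        rcases eq_or_lt_of_le hu.1 with hur | hur
        · -- u = r, p = J r
          have hA : p = S.J r := by rw [← hJu, ← hur]
          have hB : p ≠ S.J s' := by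
            intro he
            have := hJinj s' (by omega) (by omega) he.symm
            omega
          have hWm : ((p : ℕ) : ZMod γ) ∉ W := by
            rw [hW, Finset.mem_image]
            rintro ⟨u', hu', hc⟩
            rw [Finset.mem_Ioo] at hu'
            have hJA := (S.Jmem h (u := u') (by omega) (by omega)).mpr ⟨by omega, by omega⟩
            have := hJinj u' (by omega) (by omega) (S.arc_cast_inj h hJA.1 hJA.2 hp1 hp2 hc)
            omega
          rw [if_pos hJ, if_neg hK, if_neg hKm, if_neg hWm, if_pos hA, if_neg hB]
          ring
        · rcases eq_or_lt_of_le hu.2 with hus | hus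
          · -- u = s', p = J s'
            have hA : p ≠ S.J r := by
              intro he
              have := hJinj r (by omega) (by omega) he.symm
              omega
            have hB : p = S.J s' := by rw [← hJu, hus]
            have hWm : ((p : ℕ) : ZMod γ) ∉ W := by
              rw [hW, Finset.mem_image]
              rintro ⟨u', hu', hc⟩
              rw [Finset.mem_Ioo] at hu'
              have hJA := (S.Jmem h (u := u') (by omega) (by omega)).mpr ⟨by omega, by omega⟩
              have := hJinj u' (by omega) (by omega) (S.arc_cast_inj h hJA.1 hJA.2 hp1 hp2 hc)
              omega
            rw [if_pos hJ, if_neg hK, if_neg hKm, if_neg hWm, if_neg hA, if_pos hB]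
            ring
          · -- r < u < s'
            have hA : p ≠ S.J r := by
              intro he
              have := hJinj r (by omega) (by omega) he.symm
              omega
            have hB : p ≠ S.J s' := by
              intro he
              have := hJinj s' (by omega) (by omega) he.symm
              omega
            have hWm : ((p : ℕ) : ZMod γ) ∈ W := by
              rw [hW, Finset.mem_image]
              exact ⟨u, Finset.mem_Ioo.mpr ⟨hur, hus⟩, by rw [hJu]⟩
            rw [if_pos hJ, if_neg hK, if_neg hKm, if_pos hWm, if_neg hA, if_neg hB]
            ring
      · have hA : p ≠ S.J r := by
          intro he
          apply hJ
          rw [Finset.mem_image]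
          exact ⟨r, Finset.mem_Icc.mpr ⟨le_rfl, h3⟩, he.symm⟩
        have hB : p ≠ S.J s' := by
          intro he
          apply hJ
          rw [Finset.mem_image]
          exact ⟨s', Finset.mem_Icc.mpr ⟨h3, le_rfl⟩, he.symm⟩
        have hWm : ((p : ℕ) : ZMod γ) ∉ W := by
          rw [hW, Finset.mem_image]
          rintro ⟨u', hu', hc⟩
          rw [Finset.mem_Ioo] at hu'
          have hJA := (S.Jmem h (u := u') (by omega) (by omega)).mpr ⟨by omega, by omega⟩
          apply hJ
          rw [Finset.mem_image]
          exact ⟨u', Finset.mem_Icc.mpr ⟨by omega, by omega⟩,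
            S.arc_cast_inj h hJA.1 hJA.2 hp1 hp2 hc⟩
        rw [if_neg hJ, if_neg hK, if_neg hKm, if_neg hWm, if_neg hA, if_neg hB]
        ring
  -- sum identity
  have hsum : (∑ i ∈ Y, eMult S.d (S.arcZ r s') i) - (∑ i ∈ Y, (S.g i : ℤ))
      = ((W ∩ Y).card : ℤ) - ((KC ∩ Y).card : ℤ) := by
    rw [← Finset.sum_sub_distrib]
    rw [Finset.sum_congr rfl hpoint, Finset.sum_sub_distrib, Finset.sum_boole,
      Finset.sum_boole, Finset.filter_mem_eq_inter, Finset.filter_mem_eq_inter,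
      Finset.inter_comm Y W, Finset.inter_comm Y KC]
  -- counting via the core lemma
  have hwin : S.K (r + (s' - r)) < S.J r + γ := by
    have e : r + (s' - r) = s' := by omega
    rw [e]
    have := S.hKJ s' (by omega) h4
    omega
  have hcore := S.core (r := r) (m := s' - r) h1 (by omega) hwin Y W
    (by
      intro q hq1 hq2
      rw [hW, Finset.mem_image]
      exact ⟨r + q - 1, Finset.mem_Ioo.mpr ⟨by omega, by omega⟩, rfl⟩)
    (Or.inr (fun hy => S.notin_left h (hYZ hy)))
  have hKCY : KC ∩ Y = ((Finset.Icc 1 (s' - r)).filter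
      (fun q => ((S.K (r + q) : ℕ) : ZMod γ) ∈ Y)).image
        (fun q => ((S.K (r + q) : ℕ) : ZMod γ)) := by
    ext i
    simp only [hKC, Finset.mem_inter, Finset.mem_image, Finset.mem_filter, Finset.mem_Icc]
    constructor
    · rintro ⟨⟨u, hu, hui⟩, hiY⟩
      refine ⟨u - r, ⟨⟨by omega, by omega⟩, ?_⟩, ?_⟩
      · have e : r + (u - r) = u := by omega
        rw [e, hui]
        exact hiY
      · have e : r + (u - r) = u := by omega
        rw [e, hui]
    · rintro ⟨q, ⟨⟨hq1, hq2⟩, hqY⟩, hqi⟩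
      exact ⟨⟨r + q, ⟨by omega, by omega⟩, hqi⟩, by rw [← hqi]; exact hqY⟩
  have hKCcard : (KC ∩ Y).card ≤ (W ∩ Y).card + nCirc Y := by
    rw [hKCY]
    refine le_trans (Finset.card_image_le) hcore
  omega

end CSetup

namespace CSetup

variable {γ : ℕ} [NeZero γ] (S : CSetup γ)

lemma arc_admissible {r s' : ℕ} (h : S.Good r s') : Admissible S.g S.d (S.arcZ r s') :=
  ⟨S.arc_nonempty h, Or.inr (S.arc_nCirc h), S.arc_eff h, S.arc_deg h,
    fun Y hYZ hne hneZ => S.arc_semi h Y hYZ hne hneZ⟩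

lemma univ_eMult : ∀ i : ZMod γ, eMult S.d Finset.univ i = S.d i := by
  intro i
  unfold eMult
  simp

/-- all the `j`-marks, as elements of `ZMod γ`. -/
def JS : Finset (ZMod γ) := (Finset.Icc 1 S.ℓ).image (fun t => ((S.j t : ℕ) : ZMod γ))

/-- all the `k`-marks, as elements of `ZMod γ`. -/
def KS : Finset (ZMod γ) := (Finset.Icc 1 S.ℓ).image (fun t => ((S.k t : ℕ) : ZMod γ))

lemma jbounds : ∀ t, 1 ≤ t → t ≤ S.ℓ → 2 ≤ S.j t ∧ S.j t ≤ γ ∧ S.j t = S.J t := by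
  intro t h1 h2
  have hJ : S.J t = S.j t := by unfold J; rw [if_pos h2]
  have := S.J2 t h1 (by omega)
  have := S.Jγ t h1 h2
  omega

lemma kbounds : ∀ t, 1 ≤ t → t ≤ S.ℓ → 1 ≤ S.k t ∧ S.k t ≤ γ ∧ S.k t = S.K t := by
  intro t h1 h2
  have hK : S.K t = S.k t := by unfold K; rw [if_pos h2]
  have h3 := S.Kpos t h1 (by omega)
  have h4 := S.hKJ t h1 (by omega)
  have h5 := S.Jγ t h1 h2
  have hJ : S.J t = S.j t := by unfold J; rw [if_pos h2]
  omega

lemma KS_JS_disj : ∀ i : ZMod γ, i ∈ S.KS → i ∉ S.JS := by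
  intro i hK hJ
  rw [KS, Finset.mem_image] at hK
  rw [JS, Finset.mem_image] at hJ
  obtain ⟨t, ht, hti⟩ := hK
  obtain ⟨u, hu, hui⟩ := hJ
  rw [Finset.mem_Icc] at ht hu
  obtain ⟨ht2, ht3, ht4⟩ := S.kbounds t ht.1 ht.2
  obtain ⟨hu2, hu3, hu4⟩ := S.jbounds u hu.1 hu.2
  have hc : ((S.k t : ℕ) : ZMod γ) = ((S.j u : ℕ) : ZMod γ) := by rw [hti, hui]
  have heq : S.k t = S.j u := by
    rcases le_total (S.k t) (S.j u) with hle | hle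
    · exact castInj S.hγ hle (by omega) hc
    · exact (castInj S.hγ hle (by omega) hc.symm).symm
  exact S.KneJ t u (by omega) (by omega) (by omega) (by omega) (by omega)

lemma dsplit : ∀ i : ZMod γ, S.d i = (S.g i : ℤ)
    + (if i ∈ S.JS then 1 else 0) - (if i ∈ S.KS then 1 else 0) := by
  intro i
  by_cases hK : i ∈ S.KS
  · rw [if_pos hK, if_neg (S.KS_JS_disj i hK)]
    rw [KS, Finset.mem_image] at hK
    obtain ⟨t, ht, hti⟩ := hK
    rw [Finset.mem_Icc] at ht
    rw [← hti, S.hdk t ht.1 ht.2]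
    ring
  · by_cases hJ : i ∈ S.JS
    · rw [if_pos hJ, if_neg hK]
      rw [JS, Finset.mem_image] at hJ
      obtain ⟨t, ht, hti⟩ := hJ
      rw [Finset.mem_Icc] at ht
      rw [← hti, S.hdj t ht.1 ht.2]
      ring
    · have hK' : ¬ ∃ t, 1 ≤ t ∧ t ≤ S.ℓ ∧ i = ((S.k t : ℕ) : ZMod γ) := by
        rintro ⟨t, a, b, c⟩
        exact hK (by rw [KS, Finset.mem_image]; exact ⟨t, Finset.mem_Icc.mpr ⟨a, b⟩, c.symm⟩)
      have hJ' : ¬ ∃ t, 1 ≤ t ∧ t ≤ S.ℓ ∧ i = ((S.j t : ℕ) : ZMod γ) := by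
        rintro ⟨t, a, b, c⟩
        exact hJ (by rw [JS, Finset.mem_image]; exact ⟨t, Finset.mem_Icc.mpr ⟨a, b⟩, c.symm⟩)
      rw [S.hdo i hK' hJ', if_neg hK, if_neg hJ]
      ring

lemma JScard : S.JS.card = S.ℓ := by
  rw [JS, Finset.card_image_of_injOn, Nat.card_Icc]
  · omega
  · intro x hx y hy hxy
    rw [Finset.mem_coe, Finset.mem_Icc] at hx hy
    obtain ⟨hx2, hx3, hx4⟩ := S.jbounds x hx.1 hx.2
    obtain ⟨hy2, hy3, hy4⟩ := S.jbounds y hy.1 hy.2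
    have heq : S.j x = S.j y := by
      rcases le_total (S.j x) (S.j y) with hle | hle
      · exact castInj S.hγ hle (by omega) hxy
      · exact (castInj S.hγ hle (by omega) hxy.symm).symm
    by_contra hne
    rcases lt_or_gt_of_ne hne with hlt | hlt
    · have := S.Jlt x y (by omega) hlt (by omega)
      omega
    · have := S.Jlt y x (by omega) hlt (by omega)
      omega

lemma KScard : S.KS.card = S.ℓ := by
  rw [KS, Finset.card_image_of_injOn, Nat.card_Icc]
  · omega
  · intro x hx y hy hxy
    rw [Finset.mem_coe, Finset.mem_Icc] at hx hy
    obtain ⟨hx2, hx3, hx4⟩ := S.kbounds x hx.1 hx.2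
    obtain ⟨hy2, hy3, hy4⟩ := S.kbounds y hy.1 hy.2
    have heq : S.k x = S.k y := by
      rcases le_total (S.k x) (S.k y) with hle | hle
      · exact castInj S.hγ hle (by omega) hxy
      · exact (castInj S.hγ hle (by omega) hxy.symm).symm
    by_contra hne
    rcases lt_or_gt_of_ne hne with hlt | hlt
    · have := S.Klt x y (by omega) hlt (by omega)
      omega
    · have := S.Klt y x (by omega) hlt (by omega)
      omega

lemma univ_eff : ∀ i ∈ (Finset.univ : Finset (ZMod γ)), 0 ≤ eMult S.d Finset.univ i := by
  intro i _
  rw [S.univ_eMult i, S.dsplit i]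
  have hg1 : 1 ≤ (S.g i : ℤ) := by exact_mod_cast S.hg i
  by_cases hK : i ∈ S.KS
  · rw [if_pos hK, if_neg (S.KS_JS_disj i hK)]
    omega
  · rw [if_neg hK]
    split_ifs <;> omega

lemma univ_deg : ∑ i : ZMod γ, eMult S.d Finset.univ i
    = gSub S.g (Finset.univ : Finset (ZMod γ)) - 1 := by
  rw [gSub, if_pos rfl]
  rw [Finset.sum_congr rfl (fun i _ => by rw [S.univ_eMult i, S.dsplit i])]
  rw [Finset.sum_sub_distrib, Finset.sum_add_distrib, Finset.sum_boole, Finset.sum_boole,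
    Finset.filter_mem_eq_inter, Finset.filter_mem_eq_inter, Finset.univ_inter,
    Finset.univ_inter, S.JScard, S.KScard]
  ring

lemma univ_semi (Y : Finset (ZMod γ)) :
    (∑ i ∈ Y, eMult S.d (Finset.univ : Finset (ZMod γ)) i)
      ≥ (∑ i ∈ Y, (S.g i : ℤ)) - nCirc Y := by
  have hℓ := S.hℓ
  have hsum : (∑ i ∈ Y, eMult S.d (Finset.univ : Finset (ZMod γ)) i) - (∑ i ∈ Y, (S.g i : ℤ))
      = ((S.JS ∩ Y).card : ℤ) - ((S.KS ∩ Y).card : ℤ) := by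
    rw [← Finset.sum_sub_distrib]
    have e3 : ∑ i ∈ Y, (eMult S.d Finset.univ i - (S.g i : ℤ))
        = ∑ i ∈ Y, ((if i ∈ S.JS then (1:ℤ) else 0) - (if i ∈ S.KS then (1:ℤ) else 0)) :=
      Finset.sum_congr rfl (fun i _ => by rw [S.univ_eMult i, S.dsplit i]; ring)
    rw [e3]
    rw [Finset.sum_sub_distrib, Finset.sum_boole, Finset.sum_boole,
      Finset.filter_mem_eq_inter, Finset.filter_mem_eq_inter,
      Finset.inter_comm Y S.JS, Finset.inter_comm Y S.KS]
  have hwin : S.K (S.ℓ + S.ℓ) < S.J S.ℓ + γ := by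
    have e : S.ℓ + S.ℓ = S.ℓ + S.ℓ := rfl
    have h1 := S.Kshift S.ℓ hℓ le_rfl
    have h2 := S.hKJ S.ℓ hℓ (by omega)
    omega
  have hcore := S.core (r := S.ℓ) (m := S.ℓ) hℓ (by omega) hwin Y S.JS
    (by
      intro q hq1 hq2
      obtain ⟨t, ht1, ht2, hc⟩ := S.castJorig (S.ℓ + q - 1) (by omega) (by omega)
      rw [hc, JS, Finset.mem_image]
      exact ⟨t, Finset.mem_Icc.mpr ⟨ht1, ht2⟩, rfl⟩)
    (Or.inl (by
      obtain ⟨t, ht1, ht2, hc⟩ := S.castJorig S.ℓ hℓ (by omega)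
      rw [hc, JS, Finset.mem_image]
      exact ⟨t, Finset.mem_Icc.mpr ⟨ht1, ht2⟩, rfl⟩))
  have hKcast : ∀ q, 1 ≤ q → q ≤ S.ℓ →
      ((S.K (S.ℓ + q) : ℕ) : ZMod γ) = ((S.k q : ℕ) : ZMod γ) := by
    intro q h1 h2
    have e : S.ℓ + q = q + S.ℓ := by omega
    rw [e, S.Kshift q h1 h2]
    obtain ⟨a, b, c⟩ := S.kbounds q h1 h2
    push_cast [ZMod.natCast_self]
    rw [c]
    ring
  have hKSY : S.KS ∩ Y = ((Finset.Icc 1 S.ℓ).filter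
      (fun q => ((S.K (S.ℓ + q) : ℕ) : ZMod γ) ∈ Y)).image
        (fun q => ((S.K (S.ℓ + q) : ℕ) : ZMod γ)) := by
    ext i
    simp only [KS, Finset.mem_inter, Finset.mem_image, Finset.mem_filter, Finset.mem_Icc]
    constructor
    · rintro ⟨⟨u, hu, hui⟩, hiY⟩
      refine ⟨u, ⟨hu, ?_⟩, ?_⟩
      · rw [hKcast u hu.1 hu.2, hui]
        exact hiY
      · rw [hKcast u hu.1 hu.2, hui]
    · rintro ⟨q, ⟨hq, hqY⟩, hqi⟩
      rw [hKcast q hq.1 hq.2] at hqi hqY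
      exact ⟨⟨q, hq, hqi⟩, by rw [← hqi]; exact hqY⟩
  have hKScard2 : (S.KS ∩ Y).card ≤ (S.JS ∩ Y).card + nCirc Y := by
    rw [hKSY]
    exact le_trans Finset.card_image_le hcore
  omega

lemma univ_admissible : Admissible S.g S.d (Finset.univ : Finset (ZMod γ)) := by
  refine ⟨Finset.univ_nonempty, Or.inl rfl, S.univ_eff, S.univ_deg, ?_⟩
  intro Y _ _ _
  exact S.univ_semi Y

end CSetup

namespace CSetup

variable {γ : ℕ} [NeZero γ] (S : CSetup γ)

/-- normalized second index of an arc. -/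
def sp (r s : ℕ) : ℕ := if r ≤ s then s else s + S.ℓ

lemma sp_good {r s : ℕ} (hr : 1 ≤ r) (hrl : r ≤ S.ℓ) (hs : 1 ≤ s) (hsl : s ≤ S.ℓ) :
    S.Good r (S.sp r s) := by
  unfold Good sp
  split_ifs with hh <;> omega

lemma main : 1 + S.ℓ ^ 2 ≤ {Z : Finset (ZMod γ) | Admissible S.g S.d Z}.ncard := by
  classical
  set F : Finset (Finset (ZMod γ)) :=
    insert Finset.univ (((Finset.Icc 1 S.ℓ) ×ˢ (Finset.Icc 1 S.ℓ)).image
      (fun rs => S.arcZ rs.1 (S.sp rs.1 rs.2))) with hF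
  have hgood : ∀ rs ∈ (Finset.Icc 1 S.ℓ) ×ˢ (Finset.Icc 1 S.ℓ),
      S.Good rs.1 (S.sp rs.1 rs.2) := by
    intro rs hrs
    rw [Finset.mem_product, Finset.mem_Icc, Finset.mem_Icc] at hrs
    exact S.sp_good hrs.1.1 hrs.1.2 hrs.2.1 hrs.2.2
  have hFsub : ↑F ⊆ {Z : Finset (ZMod γ) | Admissible S.g S.d Z} := by
    intro Z hZ
    rw [Finset.mem_coe, hF, Finset.mem_insert] at hZ
    rcases hZ with rfl | hZ
    · exact S.univ_admissible
    · rw [Finset.mem_image] at hZ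
      obtain ⟨rs, hrs, rfl⟩ := hZ
      exact S.arc_admissible (hgood rs hrs)
  have hinj : Set.InjOn (fun rs : ℕ × ℕ => S.arcZ rs.1 (S.sp rs.1 rs.2))
      ↑((Finset.Icc 1 S.ℓ) ×ˢ (Finset.Icc 1 S.ℓ)) := by
    intro a ha b hb heq
    rw [Finset.mem_coe] at ha hb
    have hga := hgood a ha
    have hgb := hgood b hb
    rw [Finset.mem_product, Finset.mem_Icc, Finset.mem_Icc] at ha hb
    obtain ⟨ga1, ga2, ga3, ga4, ga5, ga6, ga7⟩ := S.good_facts hga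
    obtain ⟨gb1, gb2, gb3, gb4, gb5, gb6, gb7⟩ := S.good_facts hgb
    simp only at heq
    -- left endpoints agree
    have hl : ({((S.J a.1 : ℕ) : ZMod γ)} : Finset (ZMod γ)) = {((S.J b.1 : ℕ) : ZMod γ)} := by
      rw [← S.arc_filter_left hga, ← S.arc_filter_left hgb, heq]
    rw [Finset.singleton_inj] at hl
    have hr1 : a.1 = b.1 := by
      have hJeq : S.J a.1 = S.J b.1 := by
        rcases le_total (S.J a.1) (S.J b.1) with hle | hle
        · exact castInj S.hγ hle (by omega) hl
        · exact (castInj S.hγ hle (by omega) hl.symm).symm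
      by_contra hne
      rcases lt_or_gt_of_ne hne with hlt | hlt
      · have := S.Jlt a.1 b.1 (by omega) hlt (by omega)
        omega
      · have := S.Jlt b.1 a.1 (by omega) hlt (by omega)
        omega
    -- right endpoints agree
    have hrr : ({((S.J (S.sp a.1 a.2) : ℕ) : ZMod γ)} : Finset (ZMod γ))
        = {((S.J (S.sp b.1 b.2) : ℕ) : ZMod γ)} := by
      rw [← S.arc_filter_right hga, ← S.arc_filter_right hgb, heq]
    rw [Finset.singleton_inj] at hrr
    have hJs : S.J (S.sp a.1 a.2) = S.J (S.sp b.1 b.2) := by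
      have hwa : S.J (S.sp a.1 a.2) ≤ S.J a.1 + γ - 2 := by omega
      have hwb : S.J (S.sp b.1 b.2) ≤ S.J b.1 + γ - 2 := by omega
      have hJab : S.J a.1 = S.J b.1 := by rw [hr1]
      have hma : S.J a.1 ≤ S.J (S.sp a.1 a.2) := S.Jle a.1 _ ga1 ga3 ga4
      have hmb : S.J b.1 ≤ S.J (S.sp b.1 b.2) := S.Jle b.1 _ gb1 gb3 gb4
      rcases le_total (S.J (S.sp a.1 a.2)) (S.J (S.sp b.1 b.2)) with hle | hle
      · refine castInj S.hγ hle (by omega) hrr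
      · exact (castInj S.hγ hle (by omega) hrr.symm).symm
    have hsp : S.sp a.1 a.2 = S.sp b.1 b.2 := by
      by_contra hne
      rcases lt_or_gt_of_ne hne with hlt | hlt
      · have := S.Jlt _ _ (by omega) hlt (by omega)
        omega
      · have := S.Jlt _ _ (by omega) hlt (by omega)
        omega
    have hr2 : a.2 = b.2 := by
      unfold sp at hsp
      split_ifs at hsp <;> omega
    exact Prod.ext hr1 hr2
  have hnm : (Finset.univ : Finset (ZMod γ)) ∉
      ((Finset.Icc 1 S.ℓ) ×ˢ (Finset.Icc 1 S.ℓ)).image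
        (fun rs => S.arcZ rs.1 (S.sp rs.1 rs.2)) := by
    rw [Finset.mem_image]
    rintro ⟨rs, hrs, heq⟩
    exact S.arc_ne_univ (hgood rs hrs) heq
  have hcard : F.card = 1 + S.ℓ ^ 2 := by
    rw [hF, Finset.card_insert_of_notMem hnm, Finset.card_image_of_injOn hinj,
      Finset.card_product, Nat.card_Icc]
    simp only [Nat.add_sub_cancel]
    have : S.ℓ ^ 2 = S.ℓ * S.ℓ := Nat.pow_two S.ℓ
    omega
  calc 1 + S.ℓ ^ 2 = F.card := hcard.symm
    _ = (↑F : Set (Finset (ZMod γ))).ncard := (Set.ncard_coe_finset F).symm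
    _ ≤ {Z : Finset (ZMod γ) | Admissible S.g S.d Z}.ncard :=
        Set.ncard_le_ncard hFsub (Set.toFinite _)

end CSetup

/-- The final assertion of Proposition 4.3: for a strictly semistable multidegree `d` given by
the alternating data `1 = k₁ < j₁ < k₂ < ⋯ < k_ℓ < j_ℓ ≤ γ` on a circular curve all of whose
components have positive genus, the number of admissible subsets (equivalently, of irreducible
components of `W_d(C)`) is at least `1 + ℓ²`. -/
theorem circular_count_components_lower_bound (γ : ℕ) [NeZero γ] (hγ : 3 ≤ γ)
    (g : ZMod γ → ℕ) (hg : ∀ i, 1 ≤ g i)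
    (ℓ : ℕ) (hℓ : 1 ≤ ℓ) (k j : ℕ → ℕ)
    (hk1 : k 1 = 1)
    (hkj : ∀ r, 1 ≤ r → r ≤ ℓ → k r < j r)
    (hjk : ∀ r, 1 ≤ r → r < ℓ → j r < k (r + 1))
    (hjγ : j ℓ ≤ γ)
    (d : ZMod γ → ℤ)
    (hdk : ∀ r, 1 ≤ r → r ≤ ℓ → d ((k r : ZMod γ)) = (g ((k r : ZMod γ)) : ℤ) - 1)
    (hdj : ∀ r, 1 ≤ r → r ≤ ℓ → d ((j r : ZMod γ)) = (g ((j r : ZMod γ)) : ℤ) + 1)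
    (hdo : ∀ i : ZMod γ, (¬ ∃ r, 1 ≤ r ∧ r ≤ ℓ ∧ i = (k r : ZMod γ)) →
      (¬ ∃ r, 1 ≤ r ∧ r ≤ ℓ ∧ i = (j r : ZMod γ)) → d i = (g i : ℤ)) :
    1 + ℓ ^ 2 ≤ {Z : Finset (ZMod γ) | Admissible g d Z}.ncard := by
  exact CSetup.main ⟨hγ, g, hg, ℓ, hℓ, k, j, hk1, hkj, hjk, hjγ, d, hdk, hdj, hdo⟩
end
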